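/- arXiv:2008.09828 — 12 statements merged into one kernel-verified Lean document; each statement's English description precedes it below -/
import Mathlib

section
/- Every regular commutative subalgebra A of Mat_{n+1}(K) (i.e. a commutative subalgebra possessing a cyclic vector v with Av = K^{n+1}) has dimension n+1 as a K-vector space, and is maximal among commutative subalgebras of Mat_{n+1}(K). -/
set_option synthInstance.maxHeartbeats 800000 in
/-- A regular commutative subalgebra of `Mat_{n+1}(K)` (one possessing a cyclic
vector) has dimension `n+1` and is maximal among commutative subalgebras. -/
theorem regular_commutative_subalgebra_dim_and_maximal
    {K : Type*} [Field K] (n : ℕ)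
    (A : Subalgebra K (Matrix (Fin (n + 1)) (Fin (n + 1)) K))
    (hcomm : ∀ a ∈ A, ∀ b ∈ A, a * b = b * a)
    (hreg : ∃ v : Fin (n + 1) → K, ∀ w : Fin (n + 1) → K,
      ∃ a ∈ A, Matrix.mulVec a v = w) :
    Module.finrank K A = n + 1 ∧
    ∀ B : Subalgebra K (Matrix (Fin (n + 1)) (Fin (n + 1)) K),
      (∀ a ∈ B, ∀ b ∈ B, a * b = b * a) → A ≤ B → B = A := by
  obtain ⟨v, hv⟩ := hreg
  -- key: a matrix commuting with everything in A and killing v is zero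
  have key : ∀ m : Matrix (Fin (n + 1)) (Fin (n + 1)) K,
      (∀ a ∈ A, m * a = a * m) → m.mulVec v = 0 → m = 0 := by
    intro m hm hmv
    have hall : ∀ w : Fin (n + 1) → K, m.mulVec w = 0 := by
      intro w
      obtain ⟨a, ha, haw⟩ := hv w
      rw [← haw, Matrix.mulVec_mulVec, hm a ha, ← Matrix.mulVec_mulVec, hmv,
        Matrix.mulVec_zero]
    ext i j
    have := congrFun (hall (Pi.single j 1)) i
    simpa using this
  -- the evaluation linear map A → K^(n+1)
  let f : A →ₗ[K] (Fin (n + 1) → K) :=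
    { toFun := fun a => Matrix.mulVec (a : Matrix (Fin (n + 1)) (Fin (n + 1)) K) v
      map_add' := fun a b => by simp [Matrix.add_mulVec]
      map_smul' := fun c a => by simp [Matrix.smul_mulVec] }
  have hsurj : Function.Surjective f := by
    intro w
    obtain ⟨a, ha, haw⟩ := hv w
    exact ⟨⟨a, ha⟩, haw⟩
  have hinj : Function.Injective f := by
    rw [injective_iff_map_eq_zero]
    intro a ha
    have : (a : Matrix (Fin (n + 1)) (Fin (n + 1)) K) = 0 :=
      key a (fun b hb => hcomm a a.2 b hb) ha
    exact Subtype.ext this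
  have e : A ≃ₗ[K] (Fin (n + 1) → K) := LinearEquiv.ofBijective f ⟨hinj, hsurj⟩
  constructor
  · rw [e.finrank_eq]
    simp [Module.finrank_pi]
  · intro B hBcomm hAB
    refine le_antisymm ?_ hAB
    intro b hb
    obtain ⟨a, ha, haw⟩ := hv (Matrix.mulVec b v)
    have hba : b - a = 0 := by
      apply key
      · intro c hc
        have h1 : b * c = c * b := hBcomm b hb c (hAB hc)
        have h2 : a * c = c * a := hcomm a ha c hc
        rw [sub_mul, mul_sub, h1, h2]
      · rw [Matrix.sub_mulVec, haw, sub_self]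
    have : b = a := by rwa [sub_eq_zero] at hba
    rw [this]; exact ha
end

section
/- Under the Knop–Lange correspondence, for the projective space P(A) of an (n+1)-dimensional commutative associative unital algebra A with the action of G = A^×/K^×, the G-orbits on P(A) are in bijection with the nonzero principal ideals of A, via sending the class [a] of a nonzero element a ∈ A to the principal ideal (a). -/
/-- In a commutative Artinian ring, mutual divisibility implies being associated. -/
theorem assoc_of_dvd_dvd_artinian {A : Type*} [CommRing A] [IsArtinianRing A]
    {a b : A} (hba : b ∣ a) (hab : a ∣ b) : ∃ c : Aˣ, (c : A) * b = a := by
  obtain ⟨r, hr⟩ := hba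
  obtain ⟨s, hs⟩ := hab
  obtain ⟨u, hu⟩ : ∃ u : A, u = s * r := ⟨_, rfl⟩
  have hau : a * u = a := by
    rw [hu, ← mul_assoc, ← hs, ← hr]
  have hbu : b * u = b := by
    rw [hu, show b * (s * r) = b * r * s from by ring, ← hr, ← hs]
  obtain ⟨n, t, ht⟩ := IsArtinian.exists_pow_succ_smul_dvd u (1 : A)
  rw [smul_eq_mul, smul_eq_mul, mul_one] at ht
  -- key: u ^ n = t ^ k * u ^ (n + k) for all k
  have hkey : ∀ k : ℕ, u ^ n = t ^ k * u ^ (n + k) := by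
    intro k
    induction k with
    | zero => simp
    | succ k ih =>
      rw [ih]
      have h1 : u ^ (n + k) = u ^ n.succ * t * u ^ k := by rw [ht]; ring
      have h2 : u ^ n.succ * t * u ^ k = t * u ^ (n + (k + 1)) := by
        rw [Nat.succ_eq_add_one]; ring
      rw [h1, h2]; ring
  obtain ⟨e, he⟩ : ∃ e : A, e = t ^ n * u ^ n := ⟨_, rfl⟩
  have heun : e * u ^ n = u ^ n := by
    rw [he, mul_assoc, ← pow_add, ← hkey n]
  have hee : e * e = e := by
    nth_rewrite 2 [he]
    rw [show e * (t ^ n * u ^ n) = e * u ^ n * t ^ n from by ring, heun, he]; ring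
  have haun : ∀ m : ℕ, a * u ^ m = a := by
    intro m
    induction m with
    | zero => simp
    | succ m ih => rw [pow_succ, ← mul_assoc, ih, hau]
  have hbun : ∀ m : ℕ, b * u ^ m = b := by
    intro m
    induction m with
    | zero => simp
    | succ m ih => rw [pow_succ, ← mul_assoc, ih, hbu]
  have hea : e * a = a := by
    calc e * a = e * (a * u ^ n) := by rw [haun n]
    _ = a * (e * u ^ n) := by ring
    _ = a * u ^ n := by rw [heun]
    _ = a := haun n
  have heb : e * b = b := by
    calc e * b = e * (b * u ^ n) := by rw [hbun n]
    _ = b * (e * u ^ n) := by ring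
    _ = b * u ^ n := by rw [heun]
    _ = b := hbun n
  have hute : u * t * e = e := by
    calc u * t * e = t ^ n * (u ^ n.succ * t) := by
          rw [he, Nat.succ_eq_add_one]; ring
    _ = t ^ n * u ^ n := by rw [ht]
    _ = e := he.symm
  refine ⟨⟨r * e + (1 - e), s * t * e + (1 - e), ?_, ?_⟩, ?_⟩
  · have h1 : (r * e + (1 - e)) * (s * t * e + (1 - e))
        = (s * r) * t * (e * e) + (1 - 2 * e + e * e) + (r + s*t) * (e - e * e) := by
      ring
    rw [h1, ← hu, hee, hute]
    ring
  · have h1 : (s * t * e + (1 - e)) * (r * e + (1 - e))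
        = (s * r) * t * (e * e) + (1 - 2 * e + e * e) + (s*t + r) * (e - e * e) := by
      ring
    rw [h1, ← hu, hee, hute]
    ring
  · show (r * e + (1 - e)) * b = a
    have h1 : (r * e + (1 - e)) * b = r * (e * b) + b - e * b := by ring
    rw [h1, heb, hr]
    ring

/-- Knop–Lange correspondence, orbit description: two nonzero elements of a
finite-dimensional commutative associative unital algebra `A` lie in the same
orbit of `G = A^×/K^×` on `P(A)` (i.e. are associated: differ by multiplication
by a unit) if and only if they generate the same principal ideal. Thus the
`G`-orbits on `P(A)` are in bijection with the nonzero principal ideals of `A`,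
via `[a] ↦ (a)`. -/
theorem orbit_iff_same_principal_ideal
    {K A : Type*} [Field K] [IsAlgClosed K] [CharZero K]
    [CommRing A] [Algebra K A] [FiniteDimensional K A]
    (a b : A) (ha : a ≠ 0) (hb : b ≠ 0) :
    (∃ c : Aˣ, (c : A) * b = a) ↔
      Ideal.span ({a} : Set A) = Ideal.span ({b} : Set A) := by
  constructor
  · rintro ⟨c, rfl⟩
    apply le_antisymm
    · rw [Ideal.span_singleton_le_span_singleton]
      exact ⟨c, mul_comm _ _⟩
    · rw [Ideal.span_singleton_le_span_singleton]
      exact ⟨(c⁻¹ : Aˣ), by rw [mul_comm, ← mul_assoc]; simp⟩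
  · intro h
    haveI : IsArtinianRing A := IsArtinianRing.of_finite K A
    have hba : b ∣ a := by
      rw [← Ideal.span_singleton_le_span_singleton, ← h]
    have hab : a ∣ b := by
      rw [← Ideal.span_singleton_le_span_singleton, h]
    exact assoc_of_dvd_dvd_artinian hba hab
end

section
/- There is a unique (up to equivalence) effective action of G_a^n on P^n with an open orbit having only finitely many orbits; it corresponds to the truncated polynomial algebra A = K[S]/(S^{n+1}). Equivalently: a local commutative associative unital K-algebra A of dimension n+1 has only finitely many principal ideals if and only if A ≅ K[S]/(S^{n+1}). -/
/-!
Since `K` is infinite, finitely many principal ideals force every ideal to be principal, in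
particular `𝔪 = (s)`. As `s` is nilpotent and the residue field is `K`, successive approximation
gives `A = K[s]`, so `A ≅ K[X]/(minpoly s)`; the minimal polynomial divides a power of `X`, hence
is `X ^ k` with `k = dim A = n + 1`. Conversely, in `K[X]/(X^(n+1))` the maximal ideal is
generated by the nilpotent class of `X`, so every nonzero element is a unit times a power of it
and the principal ideals are the `(X^k)`, `k ≤ n + 1`.
-/

open IsLocalRing Polynomial

section InfiniteField

variable {K A : Type*} [Field K] [CommRing A] [Algebra K A]

theorem mem_span_singleton_add_smul_of_span_eq {a b : A} {t t' : K} (htt' : t ≠ t')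
    (h : Ideal.span {a + t • b} = Ideal.span {a + t' • b}) :
    a ∈ Ideal.span {a + t • b} ∧ b ∈ Ideal.span {a + t • b} := by
  set J := Ideal.span {a + t • b}
  have ht : a + t • b ∈ J := Ideal.mem_span_singleton_self _
  have ht' : a + t' • b ∈ J := h ▸ Ideal.mem_span_singleton_self _
  have hdiff : (t - t') • b ∈ J := by
    rw [sub_smul]
    convert J.sub_mem ht ht' using 1
    abel
  have hb : b ∈ J := by
    simpa [smul_smul, inv_mul_cancel₀ (sub_ne_zero.mpr htt')] using
      J.smul_of_tower_mem (t - t')⁻¹ hdiff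
  exact ⟨by simpa using J.sub_mem ht (J.smul_of_tower_mem t hb), hb⟩

/-- Among the principal ideals inside `I` pick a maximal one `(a)`; for `b ∈ I` the infinitely
many ideals `(a + t • b)` cannot all differ, and two equal ones contain both `a` and `b`. -/
theorem isPrincipalIdealRing_of_finite_setOf_principal [Infinite K]
    (hfin : {I : Ideal A | ∃ a : A, I = Ideal.span {a}}.Finite) : IsPrincipalIdealRing A := by
  refine ⟨fun I => ?_⟩
  set S := {J : Ideal A | ∃ a ∈ I, J = Ideal.span {a}}
  have hS : S.Finite := hfin.subset fun J ⟨a, _, hJ⟩ => ⟨a, hJ⟩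
  obtain ⟨_, ⟨a, haI, rfl⟩, hmax⟩ := hS.exists_maximalFor id S ⟨_, 0, I.zero_mem, rfl⟩
  refine ⟨a, le_antisymm (fun b hb => ?_) ((Ideal.span_singleton_le_iff_mem _).mpr haI)⟩
  have hmaps : Set.MapsTo (fun t : K => Ideal.span {a + t • b}) Set.univ S :=
    fun t _ => ⟨_, I.add_mem haI (I.smul_of_tower_mem t hb), rfl⟩
  obtain ⟨t, -, t', -, htt', heq⟩ := Set.infinite_univ.exists_ne_map_eq_of_mapsTo hmaps hS
  obtain ⟨ha, hb'⟩ := mem_span_singleton_add_smul_of_span_eq htt' heq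
  exact hmax (hmaps trivial) ((Ideal.span_singleton_le_iff_mem _).mpr ha) hb'

end InfiniteField

section MinimalPolynomial

variable {K A : Type*} [Field K] [CommRing A] [Algebra K A] {x : A}

theorem isIntegral_of_isNilpotent (hx : IsNilpotent x) : IsIntegral K x := by
  obtain ⟨N, hN⟩ := hx
  exact ⟨X ^ N, monic_X_pow N, by simp [hN]⟩

theorem minpoly_eq_X_pow_of_isNilpotent (hx : IsNilpotent x) :
    minpoly K x = X ^ (minpoly K x).natDegree := by
  obtain ⟨N, hN⟩ := hx
  obtain ⟨k, -, hk⟩ := (dvd_prime_pow prime_X N).mp (minpoly.dvd K x (by simp [hN]))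
  rw [eq_of_monic_of_associated (minpoly.monic (isIntegral_of_isNilpotent ⟨N, hN⟩))
    (monic_X_pow k) hk, natDegree_X_pow]

noncomputable def quotientSpanMinpolyAlgEquiv
    (hx : Function.Surjective (aeval x : K[X] →ₐ[K] A)) :
    (K[X] ⧸ Ideal.span {minpoly K x}) ≃ₐ[K] A :=
  (Ideal.quotientEquivAlgOfEq K (minpoly.ker_aeval_eq_span_minpoly K x)).symm.trans
    (Ideal.quotientKerAlgEquivOfSurjective hx)

theorem finrank_eq_natDegree_minpoly (hint : IsIntegral K x)
    (hx : Function.Surjective (aeval x : K[X] →ₐ[K] A)) :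
    Module.finrank K A = (minpoly K x).natDegree := by
  rw [← (quotientSpanMinpolyAlgEquiv hx).toLinearEquiv.finrank_eq]
  exact (AdjoinRoot.powerBasis' (minpoly.monic hint)).finrank

theorem nonempty_algEquiv_quotient_X_pow {n : ℕ} (hdim : Module.finrank K A = n + 1)
    (hnil : IsNilpotent x) (hx : Function.Surjective (aeval x : K[X] →ₐ[K] A)) :
    Nonempty (A ≃ₐ[K] K[X] ⧸ Ideal.span ({X ^ (n + 1)} : Set K[X])) := by
  have hmin : minpoly K x = X ^ (n + 1) := by
    rw [minpoly_eq_X_pow_of_isNilpotent hnil,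
      ← finrank_eq_natDegree_minpoly (isIntegral_of_isNilpotent hnil) hx, hdim]
  exact ⟨(hmin ▸ quotientSpanMinpolyAlgEquiv hx).symm⟩

end MinimalPolynomial

section PrincipalMaximalIdeal

variable {R : Type*} [CommRing R] [IsLocalRing R] {s : R}

theorem maximalIdeal_eq_span_of_surjective_aeval {K : Type*} [Field K] [Algebra K R]
    (hs : s ∈ maximalIdeal R) (hsurj : Function.Surjective (aeval s : K[X] →ₐ[K] R)) :
    maximalIdeal R = Ideal.span {s} := by
  refine le_antisymm (fun a ha => ?_) ((Ideal.span_singleton_le_iff_mem _).mpr hs)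
  obtain ⟨p, rfl⟩ := hsurj a
  have hp : aeval s p = s * aeval s p.divX + algebraMap K R (p.coeff 0) := by
    calc aeval s p = aeval s (X * p.divX + C (p.coeff 0)) := by rw [X_mul_divX_add]
      _ = _ := by simp only [map_add, map_mul, aeval_X, aeval_C]
  have hc : p.coeff 0 = 0 := by
    by_contra hc
    have hmem := (maximalIdeal R).sub_mem ha (Ideal.mul_mem_right (aeval s p.divX) _ hs)
    rw [hp, add_sub_cancel_left] at hmem
    exact (mem_maximalIdeal _).mp hmem ((IsUnit.mk0 _ hc).map _)
  rw [hp, hc, map_zero, add_zero]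
  exact Ideal.mul_mem_right _ _ (Ideal.mem_span_singleton_self s)

theorem surjective_aeval_of_maximalIdeal_eq_span {K : Type*} [Field K] [Algebra K R]
    (hres : Function.Surjective (algebraMap K (ResidueField R)))
    (hm : maximalIdeal R = Ideal.span {s}) (hs : IsNilpotent s) :
    Function.Surjective (aeval s : K[X] →ₐ[K] R) := by
  have approx : ∀ k (a : R), ∃ p : K[X], a - aeval s p ∈ Ideal.span {s ^ k} := by
    intro k
    induction k with
    | zero => exact fun a => ⟨0, by simp⟩
    | succ k ih =>
      intro a
      obtain ⟨p, hp⟩ := ih a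
      obtain ⟨c, hc⟩ := Ideal.mem_span_singleton'.mp hp
      obtain ⟨r, hr⟩ := hres (residue R c)
      have hcr : c - algebraMap K R r ∈ Ideal.span {s} := by
        rw [← hm, ← residue_eq_zero_iff, map_sub, ← hr, sub_eq_zero]
        exact IsScalarTower.algebraMap_apply K R (ResidueField R) r
      obtain ⟨d, hd⟩ := Ideal.mem_span_singleton'.mp hcr
      refine ⟨p + C r * X ^ k, Ideal.mem_span_singleton'.mpr ⟨d, ?_⟩⟩
      simp only [map_add, map_mul, aeval_C, map_pow, aeval_X]
      linear_combination s ^ k * hd + hc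
  intro a
  obtain ⟨N, hN⟩ := hs
  obtain ⟨p, hp⟩ := approx N a
  rw [hN, Ideal.span_singleton_eq_bot.mpr rfl, Ideal.mem_bot, sub_eq_zero] at hp
  exact ⟨p, hp.symm⟩

theorem exists_span_singleton_eq_span_pow (hm : maximalIdeal R = Ideal.span {s}) {N : ℕ}
    (hN : s ^ N = 0) (a : R) : ∃ k ≤ N, Ideal.span {a} = Ideal.span {s ^ k} := by
  by_cases ha : a = 0
  · exact ⟨N, le_rfl, by rw [ha, hN]⟩
  have hfin : FiniteMultiplicity s a :=
    ⟨N, fun h => ha (zero_dvd_iff.mp (by rwa [pow_succ, hN, zero_mul] at h))⟩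
  obtain ⟨c, hc, hcs⟩ := hfin.exists_eq_pow_mul_and_not_dvd
  generalize multiplicity s a = k at hc
  subst hc
  have hcu : IsUnit c := by
    by_contra hcu
    rw [← mem_nonunits_iff, ← mem_maximalIdeal, hm, Ideal.mem_span_singleton] at hcu
    exact hcs hcu
  refine ⟨k, ?_, Ideal.span_singleton_mul_right_unit hcu _⟩
  by_contra hlt
  exact ha (by rw [pow_eq_zero_of_le (not_le.mp hlt).le hN, zero_mul])

theorem finite_setOf_principal_of_maximalIdeal_eq_span (hm : maximalIdeal R = Ideal.span {s})
    (hs : IsNilpotent s) : {I : Ideal R | ∃ a : R, I = Ideal.span {a}}.Finite := by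
  obtain ⟨N, hN⟩ := hs
  refine ((Set.finite_Iic N).image fun k => Ideal.span {s ^ k}).subset ?_
  rintro _ ⟨a, rfl⟩
  obtain ⟨k, hk, h⟩ := exists_span_singleton_eq_span_pow hm hN a
  exact ⟨k, hk, h.symm⟩

end PrincipalMaximalIdeal

theorem finitely_many_principal_ideals_iff_truncated_polynomials_general
    {K A : Type*} [Field K] [IsAlgClosed K]
    [CommRing A] [Algebra K A] [FiniteDimensional K A] [IsLocalRing A]
    (n : ℕ) (hdim : Module.finrank K A = n + 1) :
    {I : Ideal A | ∃ a : A, I = Ideal.span {a}}.Finite ↔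
      Nonempty (A ≃ₐ[K]
        (Polynomial K ⧸ Ideal.span ({Polynomial.X ^ (n + 1)} : Set (Polynomial K)))) := by
  constructor
  · intro hfin
    have := isPrincipalIdealRing_of_finite_setOf_principal (K := K) hfin
    obtain ⟨s, hs⟩ := (IsPrincipalIdealRing.principal (maximalIdeal A)).principal
    rw [Ideal.submodule_span_eq] at hs
    have := IsArtinianRing.of_finite K A
    have hnil : IsNilpotent s :=
      Ring.KrullDimLE.isNilpotent_iff_mem_maximalIdeal.mpr (hs ▸ Ideal.mem_span_singleton_self s)
    have hres : Function.Surjective (algebraMap K (ResidueField A)) :=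
      (IsAlgClosed.algebraMap_bijective_of_isIntegral (k := K)).2
    exact nonempty_algEquiv_quotient_X_pow hdim hnil
      (surjective_aeval_of_maximalIdeal_eq_span hres hs hnil)
  · rintro ⟨e⟩
    set s := e.symm (Ideal.Quotient.mk _ X)
    have haeval : (aeval s : K[X] →ₐ[K] A) = e.symm.toAlgHom.comp (Ideal.Quotient.mkₐ K _) :=
      algHom_ext (by simp [s])
    have hsurj : Function.Surjective (aeval s : K[X] →ₐ[K] A) :=
      haeval ▸ e.symm.surjective.comp (Ideal.Quotient.mkₐ_surjective K _)
    have hnil : IsNilpotent s := ⟨n + 1, by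
      rw [← map_pow, ← map_pow, Ideal.Quotient.eq_zero_iff_mem.mpr
        (Ideal.mem_span_singleton_self _), map_zero]⟩
    have hm := maximalIdeal_eq_span_of_surjective_aeval
      ((mem_maximalIdeal s).mpr hnil.not_isUnit) hsurj
    exact finite_setOf_principal_of_maximalIdeal_eq_span hm hnil

/-- A local commutative associative unital `K`-algebra of dimension `n+1` has
only finitely many principal ideals if and only if it is isomorphic to the
truncated polynomial algebra `K[S]/(S^{n+1})`.  (Equivalently: there is a
unique additive action on `P^n` with finitely many orbits, corresponding to
this algebra.) -/
theorem finitely_many_principal_ideals_iff_truncated_polynomials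
    {K A : Type*} [Field K] [IsAlgClosed K] [CharZero K]
    [CommRing A] [Algebra K A] [FiniteDimensional K A] [IsLocalRing A]
    (n : ℕ) (hdim : Module.finrank K A = n + 1) :
    {I : Ideal A | ∃ a : A, I = Ideal.span {a}}.Finite ↔
      Nonempty (A ≃ₐ[K]
        (Polynomial K ⧸ Ideal.span ({Polynomial.X ^ (n + 1)} : Set (Polynomial K)))) :=
  finitely_many_principal_ideals_iff_truncated_polynomials_general n hdim
end

section
/- Under the duality between subspaces of K[x_1,...,x_n] and K[S_1,...,S_n] given by the pairing ⟨g|f⟩ = (g[f])(0), a finite-dimensional subspace V corresponds to an ideal I_V of K[S_1,...,S_n] if and only if V is translation invariant; moreover in this case V_I = {f : g[f] = 0 for all g ∈ I} and I_V = {g : g[f] = 0 for all f ∈ V}. -/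
open MvPolynomial

/-- The apolarity pairing `⟨g | f⟩ = (g[f])(0)`. -/
noncomputable def diffPairing {K : Type*} [Field K] {n : ℕ}
    (g f : MvPolynomial (Fin n) K) : K :=
  ∑ d ∈ g.support, g.coeff d * f.coeff d * ∏ i, (Nat.factorial (d i) : K)

/-- The action of `g ∈ K[S_1,…,S_n]` on `f ∈ K[x_1,…,x_n]` as a differential
operator with constant coefficients (`S_i = ∂/∂x_i`): the result `g[f]`. -/
noncomputable def diffApply {K : Type*} [Field K] {n : ℕ}
    (g f : MvPolynomial (Fin n) K) : MvPolynomial (Fin n) K :=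
  ∑ d ∈ g.support, g.coeff d •
    ((List.ofFn fun i : Fin n =>
      (((MvPolynomial.pderiv i).toLinearMap :
          Module.End K (MvPolynomial (Fin n) K)) ^ d i)).prod f)

open scoped Nat

/-!
The factorial weights make multiplication by `S_i` adjoint to `∂/∂x_i`:
`⟨S_i g | f⟩ = ⟨g | ∂_i f⟩`, and hence `⟨h | g[f]⟩ = ⟨h g | f⟩`. Monomials pair diagonally
with nonzero weights, so `g[f] = 0` exactly when `⟨h g | f⟩ = 0` for all `h`; this gives both
descriptions of `I_V` and `V_I` as soon as `I_V` is an ideal. Every linear functional on the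
polynomials supported in a finite set of monomials is of the form `⟨g | ·⟩`, so a
finite-dimensional `V` is its own double annihilator, and by adjointness `I_V` is stable under
the `S_i` exactly when `V` is stable under the `∂_i`.
-/

theorem Submodule.FG.exists_finset_support_subset {R σ : Type*} [CommSemiring R]
    {V : Submodule R (MvPolynomial σ R)} (hV : V.FG) :
    ∃ T : Finset (σ →₀ ℕ), ∀ f ∈ V, f.support ⊆ T := by
  classical
  obtain ⟨s, rfl⟩ := hV
  have hspan : Submodule.span R (s : Set (MvPolynomial σ R)) ≤
      restrictSupport R ↑(s.sup fun p => p.support) :=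
    Submodule.span_le.mpr fun p hp => (mem_restrictSupport_iff R).mpr <|
      Finset.coe_subset.mpr (Finset.le_sup (Finset.mem_coe.mp hp))
  exact ⟨s.sup fun p => p.support, fun f hf => by exact_mod_cast hspan hf⟩

namespace Apolarity

section FactorialWeight

variable (R : Type*) {σ : Type*} [CommSemiring R] [Fintype σ]

noncomputable def factorialWeight (d : σ →₀ ℕ) : R := ∏ i, ((d i)! : R)

variable {R}

theorem factorialWeight_add_single [DecidableEq σ] (d : σ →₀ ℕ) (i : σ) :
    factorialWeight R (d + Finsupp.single i 1) = factorialWeight R d * (d i + 1) := by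
  have hpt : ∀ j, (((d + Finsupp.single i 1 : σ →₀ ℕ) j)! : R) =
      (d j)! * if j = i then (d i + 1 : R) else 1 := by
    intro j
    rcases eq_or_ne j i with rfl | hj
    · simp [Nat.factorial_succ, mul_comm]
    · simp [hj]
  simp only [factorialWeight, hpt, Finset.prod_mul_distrib, Finset.prod_ite_eq', Finset.mem_univ,
    if_true]

theorem factorialWeight_ne_zero [NoZeroDivisors R] [CharZero R] (d : σ →₀ ℕ) :
    factorialWeight R d ≠ 0 :=
  Finset.prod_ne_zero_iff.mpr fun i _ => Nat.cast_ne_zero.mpr (Nat.factorial_ne_zero (d i))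

end FactorialWeight

variable {K : Type*} [Field K] {n : ℕ}

theorem diffPairing_eq_sum_of_support_subset {T : Finset (Fin n →₀ ℕ)}
    {g : MvPolynomial (Fin n) K} (hT : g.support ⊆ T) (f : MvPolynomial (Fin n) K) :
    diffPairing g f = ∑ d ∈ T, g.coeff d * f.coeff d * factorialWeight K d :=
  Finset.sum_subset hT fun d _ hd => by rw [notMem_support_iff.mp hd, zero_mul, zero_mul]

theorem diffPairing_add_left (g g' f : MvPolynomial (Fin n) K) :
    diffPairing (g + g') f = diffPairing g f + diffPairing g' f := by
  rw [diffPairing_eq_sum_of_support_subset support_add,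
    diffPairing_eq_sum_of_support_subset Finset.subset_union_left,
    diffPairing_eq_sum_of_support_subset Finset.subset_union_right, ← Finset.sum_add_distrib]
  simp only [coeff_add, add_mul]

theorem diffPairing_smul_left (c : K) (g f : MvPolynomial (Fin n) K) :
    diffPairing (c • g) f = c • diffPairing g f := by
  rw [diffPairing_eq_sum_of_support_subset support_smul,
    diffPairing_eq_sum_of_support_subset subset_rfl, smul_eq_mul, Finset.mul_sum]
  simp only [coeff_smul, smul_eq_mul, mul_assoc]

theorem diffPairing_add_right (g f f' : MvPolynomial (Fin n) K) :
    diffPairing g (f + f') = diffPairing g f + diffPairing g f' := by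
  simp only [diffPairing, ← Finset.sum_add_distrib, coeff_add, mul_add, add_mul]

theorem diffPairing_smul_right (c : K) (g f : MvPolynomial (Fin n) K) :
    diffPairing g (c • f) = c • diffPairing g f := by
  simp only [diffPairing, coeff_smul, smul_eq_mul, Finset.mul_sum]
  exact Finset.sum_congr rfl fun _ _ => by ring

variable (K n) in
noncomputable def diffPairingBilin :
    MvPolynomial (Fin n) K →ₗ[K] MvPolynomial (Fin n) K →ₗ[K] K :=
  LinearMap.mk₂ K diffPairing diffPairing_add_left diffPairing_smul_left diffPairing_add_right
    diffPairing_smul_right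

theorem diffPairingBilin_apply (g f : MvPolynomial (Fin n) K) :
    diffPairingBilin K n g f = diffPairing g f := rfl

theorem diffPairing_sum_right {ι : Type*} (s : Finset ι) (g : MvPolynomial (Fin n) K)
    (F : ι → MvPolynomial (Fin n) K) :
    diffPairing g (∑ a ∈ s, F a) = ∑ a ∈ s, diffPairing g (F a) :=
  map_sum (diffPairingBilin K n g) F s

theorem diffPairing_zero_left (f : MvPolynomial (Fin n) K) : diffPairing 0 f = 0 :=
  (diffPairingBilin K n).map_zero₂ f

theorem diffPairing_zero_right (g : MvPolynomial (Fin n) K) : diffPairing g 0 = 0 :=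
  (diffPairingBilin K n g).map_zero

theorem diffPairing_sum_left {ι : Type*} (s : Finset ι) (G : ι → MvPolynomial (Fin n) K)
    (f : MvPolynomial (Fin n) K) :
    diffPairing (∑ a ∈ s, G a) f = ∑ a ∈ s, diffPairing (G a) f := by
  simp only [← diffPairingBilin_apply, map_sum, LinearMap.sum_apply]

theorem diffPairing_monomial (d : Fin n →₀ ℕ) (c : K) (f : MvPolynomial (Fin n) K) :
    diffPairing (monomial d c) f = c * f.coeff d * factorialWeight K d := by
  rw [diffPairing_eq_sum_of_support_subset support_monomial_subset, Finset.sum_singleton,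
    coeff_monomial, if_pos rfl]

theorem diffPairing_X_mul (i : Fin n) (g f : MvPolynomial (Fin n) K) :
    diffPairing (X i * g) f = diffPairing g (pderiv i f) := by
  induction g using MvPolynomial.induction_on' with
  | monomial d c =>
    rw [X, monomial_mul, one_mul, diffPairing_monomial, diffPairing_monomial, coeff_pderiv,
      add_comm, factorialWeight_add_single]
    ring
  | add p q hp hq => rw [mul_add, diffPairing_add_left, diffPairing_add_left, hp, hq]

theorem diffPairing_mul_eq_zero {V : Submodule K (MvPolynomial (Fin n) K)}
    (hV : ∀ i : Fin n, ∀ f ∈ V, pderiv i f ∈ V) (h : MvPolynomial (Fin n) K)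
    {g : MvPolynomial (Fin n) K} (hg : ∀ f ∈ V, diffPairing g f = 0) :
    ∀ f ∈ V, diffPairing (h * g) f = 0 := by
  induction h using MvPolynomial.induction_on generalizing g with
  | C a => intro f hf; rw [C_mul', diffPairing_smul_left, hg f hf, smul_zero]
  | add p q hp hq =>
    intro f hf
    rw [add_mul, diffPairing_add_left, hp hg f hf, hq hg f hf, add_zero]
  | mul_X p i hp =>
    rw [mul_assoc]
    exact hp fun f hf => by rw [diffPairing_X_mul]; exact hg _ (hV i f hf)

def annihilatorIdeal (V : Submodule K (MvPolynomial (Fin n) K))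
    (hV : ∀ i : Fin n, ∀ f ∈ V, pderiv i f ∈ V) : Ideal (MvPolynomial (Fin n) K) where
  carrier := {g | ∀ f ∈ V, diffPairing g f = 0}
  add_mem' hg hg' f hf := by rw [diffPairing_add_left, hg f hf, hg' f hf, add_zero]
  zero_mem' f _ := diffPairing_zero_left f
  smul_mem' h _ hg := diffPairing_mul_eq_zero hV h hg

variable (K) in
def adjointPairs : Submonoid (Module.End K (MvPolynomial (Fin n) K) × MvPolynomial (Fin n) K) where
  carrier := {q | ∀ h f, diffPairing h (q.1 f) = diffPairing (h * q.2) f}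
  mul_mem' {q r} hq hr h f := by
    rw [Prod.fst_mul, Module.End.mul_apply, hq, hr, Prod.snd_mul, mul_assoc]
  one_mem' h f := by rw [Prod.fst_one, Prod.snd_one, Module.End.one_apply, mul_one]

theorem pderiv_X_mem_adjointPairs (i : Fin n) :
    ((pderiv i).toLinearMap, X i) ∈ adjointPairs K :=
  fun h f => by rw [mul_comm, diffPairing_X_mul]; rfl

variable (K) in
noncomputable def diffOp (d : Fin n →₀ ℕ) : Module.End K (MvPolynomial (Fin n) K) :=
  (List.ofFn fun i => ((pderiv i).toLinearMap : Module.End K (MvPolynomial (Fin n) K)) ^ d i).prod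

theorem diffPairing_diffOp (h f : MvPolynomial (Fin n) K) (d : Fin n →₀ ℕ) :
    diffPairing h (diffOp K d f) = diffPairing (h * monomial d 1) f := by
  set L : List (Module.End K (MvPolynomial (Fin n) K) × MvPolynomial (Fin n) K) :=
    List.ofFn fun i => ((pderiv i).toLinearMap, X i) ^ d i
  have hmem : L.prod ∈ adjointPairs K :=
    Submonoid.list_prod_mem _ fun q hq => by
      obtain ⟨i, rfl⟩ := List.mem_ofFn.mp hq
      exact pow_mem (pderiv_X_mem_adjointPairs i) _
  have hfst : L.prod.1 = diffOp K d := by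
    rw [show L.prod.1 = MonoidHom.fst _ _ L.prod from rfl, map_list_prod, List.map_ofFn]
    rfl
  have hsnd : L.prod.2 = monomial d 1 := by
    rw [show L.prod.2 = MonoidHom.snd _ _ L.prod from rfl, map_list_prod, List.map_ofFn,
      monomial_eq, C_1, one_mul, Finsupp.prod_fintype _ _ fun i => pow_zero (X i),
      ← List.prod_ofFn]
    rfl
  rw [← hfst, hmem h f, hsnd]

theorem diffApply_eq_sum (g f : MvPolynomial (Fin n) K) :
    diffApply g f = ∑ d ∈ g.support, g.coeff d • diffOp K d f := rfl

theorem diffPairing_diffApply (h g f : MvPolynomial (Fin n) K) :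
    diffPairing h (diffApply g f) = diffPairing (h * g) f := by
  conv_rhs => rw [g.as_sum, Finset.mul_sum, diffPairing_sum_left]
  rw [diffApply_eq_sum, diffPairing_sum_right]
  refine Finset.sum_congr rfl fun d _ => ?_
  rw [diffPairing_smul_right, diffPairing_diffOp, ← diffPairing_smul_left, ← mul_smul_comm,
    smul_monomial, smul_eq_mul, mul_one]

theorem diffPairing_one_left (f : MvPolynomial (Fin n) K) : diffPairing 1 f = f.coeff 0 := by
  rw [← C_1, ← monomial_zero', diffPairing_monomial, one_mul, factorialWeight]
  simp

theorem diffPairing_eq_coeff_zero_diffApply (g f : MvPolynomial (Fin n) K) :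
    diffPairing g f = (diffApply g f).coeff 0 := by
  rw [← diffPairing_one_left, diffPairing_diffApply, one_mul]

theorem diffPairing_eq_zero_of_diffApply_eq_zero {g f : MvPolynomial (Fin n) K}
    (h : diffApply g f = 0) : diffPairing g f = 0 := by
  rw [diffPairing_eq_coeff_zero_diffApply, h, coeff_zero]

section CharZero

variable [CharZero K]

theorem eq_zero_of_forall_diffPairing_eq_zero {f : MvPolynomial (Fin n) K}
    (h : ∀ g, diffPairing g f = 0) : f = 0 := by
  ext m
  have hm := h (monomial m 1)
  rw [diffPairing_monomial, one_mul] at hm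
  exact (mul_eq_zero.mp hm).resolve_right (factorialWeight_ne_zero m)

theorem diffApply_eq_zero_iff {g f : MvPolynomial (Fin n) K} :
    diffApply g f = 0 ↔ ∀ h, diffPairing (h * g) f = 0 := by
  simp_rw [← diffPairing_diffApply]
  exact ⟨fun h0 h => h0 ▸ diffPairing_zero_right h, eq_zero_of_forall_diffPairing_eq_zero⟩

theorem exists_diffPairing_eq_of_support_subset (ℓ : Module.Dual K (MvPolynomial (Fin n) K))
    (T : Finset (Fin n →₀ ℕ)) :
    ∃ g, ∀ f : MvPolynomial (Fin n) K, f.support ⊆ T → diffPairing g f = ℓ f := by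
  refine ⟨∑ e ∈ T, monomial e (ℓ (monomial e 1) / factorialWeight K e), fun f hf => ?_⟩
  have hf_sum : ∑ e ∈ T, monomial e (f.coeff e) = f := by
    rw [← Finset.sum_subset hf fun e _ he => by rw [notMem_support_iff.mp he, map_zero]]
    exact support_sum_monomial_coeff f
  calc diffPairing (∑ e ∈ T, monomial e (ℓ (monomial e 1) / factorialWeight K e)) f
      = ∑ e ∈ T, f.coeff e * ℓ (monomial e 1) := by
        rw [diffPairing_sum_left]
        refine Finset.sum_congr rfl fun e _ => ?_
        rw [diffPairing_monomial]
        field_simp [factorialWeight_ne_zero e]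
    _ = ℓ f := by
        conv_rhs => rw [← hf_sum]
        rw [map_sum]
        refine Finset.sum_congr rfl fun e _ => ?_
        rw [← smul_eq_mul, ← map_smul, smul_monomial, smul_eq_mul, mul_one]

theorem mem_of_forall_diffPairing_eq_zero (V : Submodule K (MvPolynomial (Fin n) K))
    [FiniteDimensional K V] {f₀ : MvPolynomial (Fin n) K}
    (h : ∀ g, (∀ f ∈ V, diffPairing g f = 0) → diffPairing g f₀ = 0) : f₀ ∈ V := by
  obtain ⟨T, hT⟩ :=
    ((Submodule.fg_iff_finiteDimensional V).mpr ‹_›).exists_finset_support_subset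
  rw [← Subspace.forall_mem_dualAnnihilator_apply_eq_zero_iff]
  intro ℓ hℓ
  obtain ⟨g, hg⟩ := exists_diffPairing_eq_of_support_subset ℓ (T ∪ f₀.support)
  rw [← hg f₀ Finset.subset_union_right]
  refine h g fun f hf => ?_
  rw [hg f ((hT f hf).trans Finset.subset_union_left)]
  exact (Submodule.mem_dualAnnihilator ℓ).mp hℓ f hf

theorem pderiv_mem_of_coe_ideal_eq (V : Submodule K (MvPolynomial (Fin n) K))
    [FiniteDimensional K V] {I : Ideal (MvPolynomial (Fin n) K)}
    (hI : (I : Set (MvPolynomial (Fin n) K)) = {g | ∀ f ∈ V, diffPairing g f = 0})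
    (i : Fin n) {f : MvPolynomial (Fin n) K} (hf : f ∈ V) : pderiv i f ∈ V := by
  have mem_I (p : MvPolynomial (Fin n) K) : p ∈ I ↔ ∀ f ∈ V, diffPairing p f = 0 :=
    Set.ext_iff.mp hI p
  refine mem_of_forall_diffPairing_eq_zero V fun g hg => ?_
  rw [← diffPairing_X_mul]
  exact (mem_I _).mp (I.mul_mem_left _ ((mem_I g).mpr hg)) f hf

end CharZero

end Apolarity

open Apolarity

/-- Under the duality given by the pairing `⟨g|f⟩ = (g[f])(0)`, a
finite-dimensional subspace `V ⊆ K[x_1,…,x_n]` corresponds to an *ideal* `I_V`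
of `K[S_1,…,S_n]` if and only if `V` is translation invariant; moreover in this
case `V_I = {f : g[f] = 0 ∀ g ∈ I}` and `I_V = {g : g[f] = 0 ∀ f ∈ V}`. -/
theorem dual_is_ideal_iff_translation_invariant
    {K : Type*} [Field K] [CharZero K] {n : ℕ}
    (V : Submodule K (MvPolynomial (Fin n) K)) [FiniteDimensional K V] :
    ((∃ I : Ideal (MvPolynomial (Fin n) K),
        (I : Set (MvPolynomial (Fin n) K)) = {g | ∀ f ∈ V, diffPairing g f = 0}) ↔
      (∀ i : Fin n, ∀ f ∈ V, MvPolynomial.pderiv i f ∈ V)) ∧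
    ((∀ i : Fin n, ∀ f ∈ V, MvPolynomial.pderiv i f ∈ V) →
      ({g | ∀ f ∈ V, diffPairing g f = 0}
          = {g | ∀ f ∈ V, diffApply g f = 0} ∧
       ∀ I : Ideal (MvPolynomial (Fin n) K),
         {f | ∀ g ∈ I, diffPairing g f = 0}
            = {f | ∀ g ∈ I, diffApply g f = 0})) := by
  refine ⟨⟨fun ⟨I, hI⟩ i f hf => pderiv_mem_of_coe_ideal_eq V hI i hf,
    fun hV => ⟨annihilatorIdeal V hV, rfl⟩⟩, fun hV => ⟨?_, fun I => ?_⟩⟩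
  · ext g
    exact ⟨fun hg f hf => diffApply_eq_zero_iff.mpr fun h => diffPairing_mul_eq_zero hV h hg f hf,
      fun hg f hf => diffPairing_eq_zero_of_diffApply_eq_zero (hg f hf)⟩
  · ext f
    exact ⟨fun hf g hg => diffApply_eq_zero_iff.mpr fun h => hf _ (I.mul_mem_left h hg),
      fun hf g hg => diffPairing_eq_zero_of_diffApply_eq_zero (hf g hg)⟩
end

section
/- A translation invariant subspace V ⊆ K[x_1,...,x_n] is non-degenerate (no nonzero linear combination of ∂/∂x_1,...,∂/∂x_n annihilates V) if and only if V generates K[x_1,...,x_n] as a K-algebra. -/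
/-!
If `D = ∑ cᵢ ∂ᵢ` kills `V`, then the derivation `D` kills the algebra generated by `V`; when this
is everything, `cⱼ = D xⱼ = 0`.

Conversely, the algebra `A` generated by `V` is again translation invariant. Let `L` be the space
of linear forms lying in `A` and `U = L^⊥`. By strong induction on the degree, `D_c` kills `A` for
every `c ∈ U`: for `f ∈ A` with linear part `ℓ`, the polynomial `D_c f` is constant, since its
partial derivatives `D_c ∂ᵢ f` vanish, so it equals `ℓ(c)` and `f - f(0) - ℓ` is killed by every
`D_c`, `c ∈ U`. By Euler's identity, applied degree by degree, such a polynomial lies in the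
algebra generated by `U^⊥ = L`, hence in `A`. Thus `ℓ ∈ L` and `D_c f = ℓ(c) = 0`.
Non-degeneracy now gives `U = 0`, so every coordinate `xⱼ` is a linear form in `A`.
-/

open Module

namespace Derivation

variable {R A : Type*} [CommSemiring R] [CommSemiring A] [Algebra R A]

theorem apply_mem_adjoin (D : Derivation R A A) {s : Set A}
    (hs : ∀ a ∈ s, D a ∈ Algebra.adjoin R s) {a : A} (ha : a ∈ Algebra.adjoin R s) :
    D a ∈ Algebra.adjoin R s := by
  induction ha using Algebra.adjoin_induction with
  | mem x hx => exact hs x hx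
  | algebraMap r => simp
  | add x y _ _ hx hy => simpa using add_mem hx hy
  | mul x y hx' hy' hx hy =>
    rw [leibniz, smul_eq_mul, smul_eq_mul]
    exact add_mem (mul_mem hx' hy) (mul_mem hy' hx)

end Derivation

namespace MvPolynomial

variable {σ R : Type*}

section CommSemiring

variable [CommSemiring R]

theorem totalDegree_pderiv_lt {i : σ} {f : MvPolynomial σ R} (h : pderiv i f ≠ 0) :
    (pderiv i f).totalDegree < f.totalDegree := by
  obtain ⟨m, hm, hdeg⟩ := Finset.exists_mem_eq_sup _ (support_nonempty.mpr h)
    fun m : σ →₀ ℕ => m.sum fun _ e => e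
  have hcoeff : coeff (m + Finsupp.single i 1) f ≠ 0 := by
    rw [mem_support_iff, coeff_pderiv] at hm
    exact left_ne_zero_of_mul hm
  have := le_totalDegree (mem_support_iff.mpr hcoeff)
  rw [Finsupp.sum_add_index' (fun _ => rfl) (fun _ _ _ => rfl),
    Finsupp.sum_single_index rfl] at this
  rw [totalDegree, hdeg]
  omega

theorem pderiv_homogeneousComponent_succ (i : σ) (k : ℕ) (f : MvPolynomial σ R) :
    pderiv i (homogeneousComponent (k + 1) f) = homogeneousComponent k (pderiv i f) := by
  ext m
  have hdeg : (m + Finsupp.single i 1).degree = m.degree + 1 := by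
    rw [map_add, Finsupp.degree_single]
  simp only [coeff_pderiv, coeff_homogeneousComponent, hdeg, add_left_inj]
  split_ifs <;> simp

end CommSemiring

section CommRing

variable [CommRing R]

theorem pderiv_ext [IsAddTorsionFree R] {f g : MvPolynomial σ R}
    (hD : ∀ i, pderiv i f = pderiv i g) (hc : constantCoeff f = constantCoeff g) : f = g := by
  apply coe_injective σ R
  refine MvPowerSeries.pderiv.ext (fun i => ?_) hc
  rw [MvPowerSeries.pderiv_coe, MvPowerSeries.pderiv_coe, hD]

theorem pderiv_comm (i j : σ) (f : MvPolynomial σ R) :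
    pderiv i (pderiv j f) = pderiv j (pderiv i f) := by
  classical
  have h : ⁅pderiv i, pderiv j⁆ = (0 : Derivation R (MvPolynomial σ R) (MvPolynomial σ R)) :=
    derivation_ext fun k => by
      rw [Derivation.commutator_apply, pderiv_X, pderiv_X, Pi.single_apply, Pi.single_apply]
      split_ifs <;> simp
  have := congr($h f)
  rwa [Derivation.commutator_apply, Derivation.zero_apply, sub_eq_zero] at this

end CommRing

section DirDeriv

variable [CommSemiring R] [Fintype σ]

noncomputable def dirDeriv : (σ → R) →ₗ[R] Derivation R (MvPolynomial σ R) (MvPolynomial σ R) :=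
  Fintype.linearCombination R pderiv

theorem dirDeriv_apply (c : σ → R) (f : MvPolynomial σ R) :
    dirDeriv c f = ∑ i, c i • pderiv i f := by
  rw [dirDeriv, Fintype.linearCombination_apply, ← Derivation.coeFnAddMonoidHom_apply, map_sum]
  simp

@[simp]
theorem dirDeriv_single [DecidableEq σ] (i : σ) : dirDeriv (Pi.single i (1 : R)) = pderiv i := by
  simp [dirDeriv]

@[simp]
theorem dirDeriv_X (c : σ → R) (j : σ) : dirDeriv c (X j : MvPolynomial σ R) = C (c j) := by
  classical
  simp [dirDeriv_apply, pderiv_X, Pi.single_apply, smul_eq_C_mul]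

theorem dirDeriv_homogeneousComponent_succ (c : σ → R) (k : ℕ) (f : MvPolynomial σ R) :
    dirDeriv c (homogeneousComponent (k + 1) f) = homogeneousComponent k (dirDeriv c f) := by
  simp [dirDeriv_apply, pderiv_homogeneousComponent_succ]

noncomputable def linearForm : Dual R (σ → R) →ₗ[R] MvPolynomial σ R where
  toFun φ := ∑ i, φ (Pi.basisFun R σ i) • X i
  map_add' φ ψ := by simp [add_smul, Finset.sum_add_distrib]
  map_smul' a φ := by simp [Finset.smul_sum, smul_smul]

theorem linearForm_proj (j : σ) : linearForm (LinearMap.proj j : Dual R (σ → R)) = X j := by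
  classical
  simp [linearForm, Pi.single_apply]

theorem dirDeriv_linearForm (c : σ → R) (φ : Dual R (σ → R)) :
    dirDeriv c (linearForm φ) = C (φ c) := by
  conv_rhs => rw [← (Pi.basisFun R σ).sum_repr c]
  simp [linearForm, smul_eq_C_mul, mul_comm]

noncomputable def linearPart (f : MvPolynomial σ R) : Dual R (σ → R) where
  toFun c := constantCoeff (dirDeriv c f)
  map_add' c d := by simp
  map_smul' a c := by simp

theorem sum_X_mul_dirDeriv (P : (σ → R) →ₗ[R] σ → R) (f : MvPolynomial σ R) :
    ∑ i, X i * dirDeriv (P (Pi.basisFun R σ i)) f =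
      ∑ j, linearForm (LinearMap.proj j ∘ₗ P) * pderiv j f := by
  simp only [dirDeriv_apply, linearForm, LinearMap.coe_mk, AddHom.coe_mk, LinearMap.comp_apply,
    LinearMap.proj_apply, Finset.mul_sum, Finset.sum_mul]
  rw [Finset.sum_comm]
  simp [mul_comm]

end DirDeriv

theorem pderiv_dirDeriv [CommRing R] [Fintype σ] (i : σ) (c : σ → R) (f : MvPolynomial σ R) :
    pderiv i (dirDeriv c f) = dirDeriv c (pderiv i f) := by
  simp [dirDeriv_apply, pderiv_comm i]

section Field

variable [Fintype σ] {K : Type*} [Field K] [CharZero K]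


theorem mem_adjoin_linearForm_of_isHomogeneous (U : Submodule K (σ → K)) (d : ℕ)
    {f : MvPolynomial σ K} (hf : f.IsHomogeneous d) (hU : ∀ c ∈ U, dirDeriv c f = 0) :
    f ∈ Algebra.adjoin K (linearForm '' U.dualAnnihilator) := by
  induction d generalizing f with
  | zero =>
    rw [totalDegree_eq_zero_iff_eq_C.mp ((totalDegree_zero_iff_isHomogeneous σ).mpr hf)]
    exact Subalgebra.algebraMap_mem _ _
  | succ d ih =>
    classical
    obtain ⟨U', hU'⟩ := U.exists_isCompl
    set P := U'.projection U hU'.symm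
    -- `∂ᵢ f = D_{P eᵢ} f` because `eᵢ - P eᵢ ∈ U`
    have euler : (d + 1) • f = ∑ j, linearForm (LinearMap.proj j ∘ₗ P) * pderiv j f := by
      rw [← sum_X_mul_dirDeriv, ← hf.sum_X_mul_pderiv]
      refine Finset.sum_congr rfl fun i _ => congrArg _ ?_
      have := hU _ (Submodule.sub_projection_mem hU'.symm (Pi.basisFun K σ i))
      rwa [map_sub, Derivation.sub_apply, sub_eq_zero, Pi.basisFun_apply, dirDeriv_single] at this
    have hmem : (d + 1) • f ∈ Algebra.adjoin K (linearForm '' U.dualAnnihilator) := by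
      rw [euler]
      refine Subalgebra.sum_mem _ fun j _ => Subalgebra.mul_mem _ (Algebra.subset_adjoin ?_) ?_
      · refine ⟨_, (Submodule.mem_dualAnnihilator _).mpr fun u hu => ?_, rfl⟩
        simp [P, Submodule.projection_apply_of_mem_right hU'.symm hu]
      · exact ih hf.pderiv fun c hc => by rw [← pderiv_dirDeriv, hU c hc, map_zero]
    have hd : (d + 1 : K) ≠ 0 := Nat.cast_add_one_ne_zero d
    simpa [← Nat.cast_smul_eq_nsmul K, smul_smul, inv_mul_cancel₀ hd] using
      Subalgebra.smul_mem _ hmem (d + 1 : K)⁻¹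

theorem mem_adjoin_linearForm_of_dirDeriv_eq_zero (U : Submodule K (σ → K))
    {f : MvPolynomial σ K} (hU : ∀ c ∈ U, dirDeriv c f = 0) :
    f ∈ Algebra.adjoin K (linearForm '' U.dualAnnihilator) := by
  rw [← sum_homogeneousComponent f]
  refine Subalgebra.sum_mem _ fun k _ => ?_
  refine mem_adjoin_linearForm_of_isHomogeneous U k (homogeneousComponent_isHomogeneous k f)
    fun c hc => ?_
  cases k with
  | zero => rw [homogeneousComponent_zero, ← algebraMap_eq, Derivation.map_algebraMap]
  | succ k => rw [dirDeriv_homogeneousComponent_succ, hU c hc, map_zero]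

theorem dirDeriv_eq_zero_of_mem_dualCoannihilator (A : Subalgebra K (MvPolynomial σ K))
    (hA : ∀ i, ∀ f ∈ A, pderiv i f ∈ A) {f : MvPolynomial σ K} (hf : f ∈ A) :
    ∀ c ∈ (A.toSubmodule.comap linearForm).dualCoannihilator, dirDeriv c f = 0 := by
  set L := A.toSubmodule.comap linearForm
  induction hd : f.totalDegree using Nat.strong_induction_on generalizing f with
  | _ d ih =>
    have hconst : ∀ c ∈ L.dualCoannihilator, dirDeriv c f = C (linearPart f c) := by
      intro c hc
      refine pderiv_ext (fun i => ?_) (by simp [linearPart])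
      rw [pderiv_dirDeriv, pderiv_C]
      by_cases hi : pderiv i f = 0
      · rw [hi, map_zero]
      · exact ih _ (hd ▸ totalDegree_pderiv_lt hi) (hA i f hf) rfl c hc
    have hlin : linearForm (linearPart f) ∈ A := by
      set g := f - C (constantCoeff f) - linearForm (linearPart f)
      have hg : g ∈ A := by
        refine Algebra.adjoin_le ?_
          (mem_adjoin_linearForm_of_dirDeriv_eq_zero L.dualCoannihilator fun c hc => ?_)
        · rintro _ ⟨φ, hφ, rfl⟩
          rwa [Subspace.dualCoannihilator_dualAnnihilator_eq] at hφ
        · simp [g, hconst c hc, dirDeriv_linearForm]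
      have : linearForm (linearPart f) = f - algebraMap K _ (constantCoeff f) - g := by
        simp [g]
      rw [this]
      exact sub_mem (sub_mem hf (A.algebraMap_mem _)) hg
    intro c hc
    rw [hconst c hc, (Submodule.mem_dualCoannihilator c).mp hc _ hlin, map_zero]

theorem eq_top_of_nondegenerate (A : Subalgebra K (MvPolynomial σ K))
    (hA : ∀ i, ∀ f ∈ A, pderiv i f ∈ A) (hnd : ∀ c, (∀ f ∈ A, dirDeriv c f = 0) → c = 0) :
    A = ⊤ := by
  set L := A.toSubmodule.comap linearForm
  have hU : L.dualCoannihilator = ⊥ := eq_bot_iff.mpr fun c hc =>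
    hnd c fun f hf => dirDeriv_eq_zero_of_mem_dualCoannihilator A hA hf c hc
  have hL : L = ⊤ := by
    rw [← Subspace.dualCoannihilator_dualAnnihilator_eq (W := L), hU,
      Submodule.dualAnnihilator_bot]
  rw [eq_top_iff, ← adjoin_range_X, Algebra.adjoin_le_iff]
  rintro _ ⟨j, rfl⟩
  rw [← linearForm_proj j]
  exact (hL ▸ Submodule.mem_top : LinearMap.proj j ∈ L)

end Field

end MvPolynomial

open MvPolynomial

/-- A translation invariant subspace `V ⊆ K[x_1,…,x_n]` is non-degenerate (no
nonzero linear combination of `∂/∂x_1,…,∂/∂x_n` annihilates `V`) if and only if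
`V` generates `K[x_1,…,x_n]` as a `K`-algebra. -/
theorem nondegenerate_iff_generating
    {K : Type*} [Field K] [CharZero K] {n : ℕ}
    (V : Submodule K (MvPolynomial (Fin n) K))
    (hV : ∀ i : Fin n, ∀ f ∈ V, MvPolynomial.pderiv i f ∈ V) :
    (∀ c : Fin n → K,
        (∀ f ∈ V, (∑ i, c i • MvPolynomial.pderiv i f) = 0) → c = 0) ↔
    Algebra.adjoin K (V : Set (MvPolynomial (Fin n) K)) = ⊤ := by
  simp_rw [← dirDeriv_apply]
  constructor
  · intro hnd
    refine eq_top_of_nondegenerate _ (fun i f =>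
      (pderiv i).apply_mem_adjoin fun g hg => Algebra.subset_adjoin (hV i g hg))
      fun c hc => hnd c fun f hf => hc f (Algebra.subset_adjoin hf)
  · intro htop c hc
    have hD : dirDeriv c = 0 := Derivation.ext_of_adjoin_eq_top _ htop hc
    funext j
    simpa using congr($hD (X j))
end

section
/- Let A be a finite-dimensional local commutative associative unital algebra of dimension n+1 defining an additive action on P^n = P(A). The set of fixed points of the G_a^n-action on P(A) equals P(Soc A); in particular the additive action has a unique fixed point if and only if A is Gorenstein. -/
/-- Truncated exponential of an element of a finite-dimensional algebra
(this is the usual exponential when the element is nilpotent). -/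
noncomputable def algExp (K : Type*) {A : Type*} [Field K] [CommRing A] [Algebra K A]
    [FiniteDimensional K A] (u : A) : A :=
  ∑ k ∈ Finset.range (Module.finrank K A + 1),
    ((Nat.factorial k : K)⁻¹) • u ^ k

/-- The socle `Soc A = {a ∈ A : m·a = 0}` of a local algebra `A`. -/
noncomputable def socle (K A : Type*) [Field K] [CommRing A] [Algebra K A]
    [IsLocalRing A] : Submodule K A :=
  ⨅ u : IsLocalRing.maximalIdeal A, LinearMap.ker (LinearMap.mulLeft K (u : A))

/-- If `y` is nilpotent and `a = y * a`, then `a = 0`. -/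
lemma aux_fix0 {A : Type*} [CommRing A] {y a : A} (hy : IsNilpotent y)
    (ha : a = y * a) : a = 0 := by
  obtain ⟨N, hN⟩ := hy
  have key : ∀ k : ℕ, a = y ^ k * a := by
    intro k
    induction k with
    | zero => simp
    | succ k ih =>
      calc a = y ^ k * a := ih
      _ = y ^ k * (y * a) := by rw [← ha]
      _ = y ^ (k + 1) * a := by ring
  have := key N
  rw [hN, zero_mul] at this
  exact this

lemma aux_mem_socle {K A : Type*} [Field K] [CommRing A] [Algebra K A]
    [IsLocalRing A] (a : A) :
    a ∈ socle K A ↔ ∀ u ∈ IsLocalRing.maximalIdeal A, u * a = 0 := by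
  simp only [socle, Submodule.mem_iInf, LinearMap.mem_ker, LinearMap.mulLeft_apply]
  exact ⟨fun h u hu => h ⟨u, hu⟩, fun h u => h u u.2⟩

lemma aux_nilpotent_of_mem {K A : Type*} [Field K] [CommRing A] [Algebra K A]
    [FiniteDimensional K A] [IsLocalRing A] {u : A}
    (hu : u ∈ IsLocalRing.maximalIdeal A) : IsNilpotent u := by
  have hA : IsArtinianRing A := isArtinian_of_tower K inferInstance
  have h := IsArtinianRing.isNilpotent_jacobson_bot (R := A)
  rw [IsLocalRing.jacobson_eq_maximalIdeal (⊥ : Ideal A) bot_ne_top] at h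
  obtain ⟨N, hN⟩ := h
  have : u ^ N ∈ IsLocalRing.maximalIdeal A ^ N := Ideal.pow_mem_pow hu N
  rw [hN] at this
  exact ⟨N, by simpa using this⟩

/-- For the additive action on `P^n = P(A)` given by a local commutative
associative unital algebra `A` of dimension `n+1` (the group `exp(m) ≅ G_a^n`
acting by multiplication), the set of fixed points of the `G_a^n`-action on
`P(A)` equals `P(Soc A)`; in particular the action has a unique fixed point if
and only if `A` is Gorenstein (`dim Soc A = 1`). -/
theorem fixedPoints_eq_socle_and_unique_iff_gorenstein
    {K A : Type*} [Field K] [IsAlgClosed K] [CharZero K]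
    [CommRing A] [Algebra K A] [FiniteDimensional K A] [IsLocalRing A]
    {n : ℕ} (hdim : Module.finrank K A = n + 1) :
    (∀ a : A, a ≠ 0 →
      ((∀ u ∈ IsLocalRing.maximalIdeal A, ∃ c : K, algExp K u * a = c • a) ↔
        a ∈ socle K A)) ∧
    ((∃ a : A, a ≠ 0 ∧
        (∀ u ∈ IsLocalRing.maximalIdeal A, ∃ c : K, algExp K u * a = c • a) ∧
        ∀ b : A, b ≠ 0 →
          (∀ u ∈ IsLocalRing.maximalIdeal A, ∃ c : K, algExp K u * b = c • b) →
          ∃ c : K, b = c • a) ↔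
      Module.finrank K (socle K A) = 1) := by
  -- `algExp K u - 1 ∈ m` for `u ∈ m`
  have hexp_sub_one : ∀ u ∈ IsLocalRing.maximalIdeal A,
      algExp K u - 1 ∈ IsLocalRing.maximalIdeal A := by
    intro u hu
    have : algExp K u =
        (∑ i ∈ Finset.range (Module.finrank K A),
          ((Nat.factorial (i + 1) : K)⁻¹) • u ^ (i + 1)) + 1 := by
      rw [algExp, Finset.sum_range_succ']
      simp
    rw [this, add_sub_cancel_right]
    refine Ideal.sum_mem _ fun i _ => ?_
    have hpow : u ^ (i + 1) ∈ IsLocalRing.maximalIdeal A := by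
      rw [pow_succ]; exact Ideal.mul_mem_left _ _ hu
    rw [Algebra.smul_def]
    exact Ideal.mul_mem_left _ _ hpow
  -- the expansion of `algExp K u * a`
  have hexpand : ∀ u a : A, algExp K u * a =
      ∑ k ∈ Finset.range (Module.finrank K A + 1),
        ((Nat.factorial k : K)⁻¹) • (u ^ k * a) := by
    intro u a
    rw [algExp, Finset.sum_mul]
    exact Finset.sum_congr rfl fun k _ => smul_mul_assoc _ _ _
  -- reverse inclusion: socle elements are fixed with c = 1
  have hsoc_fixed : ∀ a : A, a ∈ socle K A →
      ∀ u ∈ IsLocalRing.maximalIdeal A, algExp K u * a = a := by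
    intro a hsoc u hu
    have hua : u * a = 0 := (aux_mem_socle a).1 hsoc u hu
    rw [hexpand]
    rw [Finset.sum_eq_single 0]
    · simp
    · intro k _ hk
      obtain ⟨j, rfl⟩ := Nat.exists_eq_succ_of_ne_zero hk
      have : u ^ (j + 1) * a = 0 := by
        rw [pow_succ, mul_assoc, hua, mul_zero]
      rw [this, smul_zero]
    · intro h; simp at h
  -- forward inclusion: fixed vectors lie in the socle
  have hfixed_soc : ∀ a : A, a ≠ 0 →
      (∀ u ∈ IsLocalRing.maximalIdeal A, ∃ c : K, algExp K u * a = c • a) →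
      a ∈ socle K A := by
    intro a ha0 hfix
    rw [aux_mem_socle]
    intro u hu
    obtain ⟨c, hc⟩ := hfix u hu
    -- step 1: c = 1
    have hx : (algExp K u - 1) * a = (c - 1) • a := by
      rw [sub_mul, one_mul, hc, sub_smul, one_smul]
    have hc1 : c = 1 := by
      by_contra hne
      have hne' : c - 1 ≠ 0 := sub_ne_zero.2 hne
      have : a = ((c - 1)⁻¹ • (algExp K u - 1)) * a := by
        rw [smul_mul_assoc, hx, smul_smul, inv_mul_cancel₀ hne', one_smul]
      exact ha0 (aux_fix0 (IsNilpotent.smul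
        (aux_nilpotent_of_mem (K := K) (hexp_sub_one u hu)) _) this)
    rw [hc1, one_smul] at hc
    -- step 2: from `algExp K u * a = a` deduce `u * a = 0`
    rw [hexpand, hdim, Finset.sum_range_succ'] at hc
    simp only [pow_zero, one_mul, Nat.factorial_zero, Nat.cast_one, inv_one, one_smul] at hc
    have h1 : (∑ i ∈ Finset.range (n + 1),
        ((Nat.factorial (i + 1) : K)⁻¹) • (u ^ (i + 1) * a)) + a = a := hc
    have h1' : ∑ i ∈ Finset.range (n + 1),
        ((Nat.factorial (i + 1) : K)⁻¹) • (u ^ (i + 1) * a) = 0 := by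
      have := congrArg (· - a) h1
      simpa using this
    rw [Finset.sum_range_succ'] at h1'
    norm_num at h1'
    have h2 : u * a = -∑ i ∈ Finset.range n,
        ((Nat.factorial (i + 1 + 1) : K)⁻¹) • (u ^ (i + 1 + 1) * a) :=
      eq_neg_of_add_eq_zero_left (by rw [add_comm]; exact h1')
    set y : A := -∑ i ∈ Finset.range n,
        ((Nat.factorial (i + 1 + 1) : K)⁻¹) • u ^ (i + 1) with hy
    have hbe : u * a = y * (u * a) := by
      have hcalc : y * (u * a) = -∑ i ∈ Finset.range n,
          ((Nat.factorial (i + 1 + 1) : K)⁻¹) • (u ^ (i + 1 + 1) * a) := by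
        rw [hy, neg_mul, Finset.sum_mul, neg_inj]
        refine Finset.sum_congr rfl fun j _ => ?_
        rw [smul_mul_assoc]
        congr 1
        rw [pow_succ]
        ring
      rw [hcalc, ← h2]
    have hym : y ∈ IsLocalRing.maximalIdeal A := by
      rw [hy]
      refine neg_mem (Ideal.sum_mem _ fun i _ => ?_)
      have hpow : u ^ (i + 1) ∈ IsLocalRing.maximalIdeal A := by
        rw [pow_succ]; exact Ideal.mul_mem_left _ _ hu
      rw [Algebra.smul_def]
      exact Ideal.mul_mem_left _ _ hpow
    have := aux_fix0 (aux_nilpotent_of_mem (K := K) hym) hbe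
    exact this
  -- first conjunct
  have part1 : ∀ a : A, a ≠ 0 →
      ((∀ u ∈ IsLocalRing.maximalIdeal A, ∃ c : K, algExp K u * a = c • a) ↔
        a ∈ socle K A) := by
    intro a ha0
    constructor
    · exact hfixed_soc a ha0
    · intro hsoc u hu
      exact ⟨1, by rw [hsoc_fixed a hsoc u hu, one_smul]⟩
  refine ⟨part1, ?_⟩
  constructor
  · rintro ⟨a, ha0, hfix, huniq⟩
    have hsoc : a ∈ socle K A := (part1 a ha0).1 hfix
    rw [finrank_eq_one_iff_of_nonzero' (⟨a, hsoc⟩ : socle K A)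
      (by simpa using ha0)]
    rintro ⟨b, hbsoc⟩
    by_cases hb0 : b = 0
    · exact ⟨0, Subtype.ext (by simp [hb0])⟩
    · obtain ⟨c, hc⟩ := huniq b hb0 ((part1 b hb0).2 hbsoc)
      exact ⟨c, by ext; simpa using hc.symm⟩
  · intro hrank
    obtain ⟨v, hv0, hv⟩ := finrank_eq_one_iff'.1 hrank
    refine ⟨(v : A), by simpa using hv0, (part1 (v : A) (by simpa using hv0)).2 v.2, ?_⟩
    intro b hb0 hbfix
    have hbsoc : b ∈ socle K A := (part1 b hb0).1 hbfix
    obtain ⟨c, hc⟩ := hv ⟨b, hbsoc⟩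
    exact ⟨c, by simpa using congrArg (Subtype.val) hc.symm⟩
end

section
/- Let m be the maximal ideal of a finite-dimensional local commutative associative unital algebra A over a field of characteristic zero, and let U ⊆ m be a K-subspace. Then m^d ⊆ U if and only if z^d ∈ U for all z ∈ m. -/
lemma coeffs_mem_of_forall_sum_mem {K A : Type*} [Field K] [Infinite K]
    [AddCommGroup A] [Module K A] (U : Submodule K A) {n : ℕ} (a : Fin n → A)
    (h : ∀ t : K, (∑ i : Fin n, t ^ (i : ℕ) • a i) ∈ U) : ∀ i, a i ∈ U := by
  intro i
  have h0 : ∀ t : K, ∑ j : Fin n, t ^ (j : ℕ) • U.mkQ (a j) = 0 := by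
    intro t
    have e : ∑ j : Fin n, t ^ (j : ℕ) • U.mkQ (a j) = U.mkQ (∑ j : Fin n, t ^ (j : ℕ) • a j) := by
      rw [map_sum]; simp
    rw [e, Submodule.mkQ_apply, Submodule.Quotient.mk_eq_zero]
    exact h t
  let b := Module.Basis.ofVectorSpace K (A ⧸ U)
  suffices hz : U.mkQ (a i) = 0 by
    rwa [Submodule.mkQ_apply, Submodule.Quotient.mk_eq_zero] at hz
  rw [← (b.repr.map_eq_zero_iff)]
  ext c
  set p : Polynomial K := ∑ j : Fin n, Polynomial.C (b.repr (U.mkQ (a j)) c) * Polynomial.X ^ (j : ℕ) with hp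
  have hev : ∀ t : K, p.eval t = 0 := by
    intro t
    have h1 := congrArg (fun v => b.repr v c) (h0 t)
    simp only [map_sum, map_smul, Finsupp.coe_finset_sum, Finsupp.coe_smul,
      Finset.sum_apply, Pi.smul_apply, smul_eq_mul, Finsupp.coe_zero, Pi.zero_apply,
      map_zero] at h1
    have h2 : p.eval t = ∑ j : Fin n, t ^ (j : ℕ) * b.repr (U.mkQ (a j)) c := by
      rw [hp, Polynomial.eval_finset_sum]
      exact Finset.sum_congr rfl fun j _ => by
        rw [Polynomial.eval_mul, Polynomial.eval_C, Polynomial.eval_pow, Polynomial.eval_X, mul_comm]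
    rw [h2]; exact h1
  have hp0 : p = 0 := Polynomial.funext fun t => by simp [hev t]
  have h2 := congrArg (fun q => Polynomial.coeff q (i : ℕ)) hp0
  simp only [hp, Polynomial.finset_sum_coeff, Polynomial.coeff_C_mul,
    Polynomial.coeff_X_pow, Polynomial.coeff_zero, mul_ite, mul_one, mul_zero,
    Fin.val_inj, Finset.sum_ite_eq, Finset.mem_univ, if_true] at h2
  simpa using h2

/-- For a subspace `U` of the maximal ideal `m` of a finite-dimensional local
commutative associative unital algebra `A` over a field of characteristic zero,
`m^d ⊆ U` if and only if `z^d ∈ U` for all `z ∈ m`. -/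
theorem pow_ideal_le_iff_pow_mem
    {K A : Type*} [Field K] [CharZero K] [CommRing A] [Algebra K A]
    [FiniteDimensional K A] [IsLocalRing A]
    (U : Submodule K A) (d : ℕ) (hd : 0 < d) :
    Submodule.restrictScalars K ((IsLocalRing.maximalIdeal A) ^ d) ≤ U ↔
      ∀ z ∈ IsLocalRing.maximalIdeal A, z ^ d ∈ U := by
  set m := IsLocalRing.maximalIdeal A with hm
  constructor
  · intro hle z hz
    exact hle (by simpa using Ideal.pow_mem_pow hz d)
  · intro h
    -- step 1: products of `d` elements of `m` lie in `U`
    have claim : ∀ k : ℕ, k ≤ d → ∀ x : Fin k → A, (∀ i, x i ∈ m) →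
        ∀ z ∈ m, z ^ (d - k) * ∏ i, x i ∈ U := by
      intro k
      induction k with
      | zero => intro _ x _ z hz; simpa using h z hz
      | succ k ih =>
        intro hk x hx z hz
        set e := d - k with he
        have he1 : 1 ≤ e := by omega
        set P := ∏ i : Fin k, x i.succ with hP
        have hmem : ∀ t : K, (∑ j : Fin (e+1),
            t ^ (j : ℕ) • ((x 0) ^ (j : ℕ) * z ^ (e - (j : ℕ)) * (e.choose (j : ℕ) : A) * P)) ∈ U := by
          intro t
          have hz' : z + t • x 0 ∈ m := by
            refine add_mem hz ?_
            rw [Algebra.smul_def]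
            exact Ideal.mul_mem_left _ _ (hx 0)
          have hih := ih (by omega) (fun i => x i.succ) (fun i => hx i.succ) _ hz'
          have expand : (z + t • x 0) ^ e * P =
              ∑ j ∈ Finset.range (e+1), t ^ j • (x 0 ^ j * z ^ (e - j) * (e.choose j : A) * P) := by
            rw [add_comm z, add_pow, Finset.sum_mul]
            refine Finset.sum_congr rfl fun j hj => ?_
            rw [smul_pow, smul_mul_assoc, smul_mul_assoc, smul_mul_assoc]
          rw [Fin.sum_univ_eq_sum_range (fun j => t ^ j • (x 0 ^ j * z ^ (e - j) * (e.choose j : A) * P)) (e+1)]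
          rw [← expand]
          exact hih
        have key := coeffs_mem_of_forall_sum_mem U _ hmem ⟨1, by omega⟩
        simp only [pow_one, Nat.choose_one_right] at key
        have hkey : (e : K) • (z ^ (e - 1) * (x 0 * P)) ∈ U := by
          rw [Nat.cast_smul_eq_nsmul, nsmul_eq_mul]
          convert key using 1
          ring
        have hfin := U.smul_mem ((e : K))⁻¹ hkey
        rw [smul_smul, inv_mul_cancel₀ (by exact_mod_cast by omega), one_smul] at hfin
        have hgoal : z ^ (d - (k+1)) * ∏ i : Fin (k+1), x i = z ^ (e - 1) * (x 0 * P) := by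
          have hd2 : d - (k+1) = e - 1 := by omega
          rw [Fin.prod_univ_succ, hd2, hP]
        rw [hgoal]
        exact hfin
    -- step 2: m^d is in the K-span of d-fold products
    have hprod : ∀ n : ℕ, ∀ y ∈ (m ^ (n+1) : Ideal A),
        y ∈ Submodule.span K {a : A | ∃ x : Fin (n+1) → A, (∀ i, x i ∈ m) ∧ a = ∏ i, x i} := by
      intro n
      induction n with
      | zero =>
        intro y hy
        exact Submodule.subset_span ⟨fun _ => y, fun _ => by simpa using hy, by simp⟩
      | succ n ihn =>
        intro y hy
        rw [pow_succ] at hy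
        refine Submodule.mul_induction_on hy (fun a ha b hb => ?_) (fun a b ha hb => add_mem ha hb)
        have hspan := ihn a ha
        refine Submodule.span_induction
          (fun c hc => ?_) (by simpa using zero_mem _)
          (fun c c' _ _ h1 h2 => by simpa [add_mul] using add_mem h1 h2)
          (fun r c _ h1 => by simpa [smul_mul_assoc] using Submodule.smul_mem _ r h1)
          hspan
        obtain ⟨x, hxm, rfl⟩ := hc
        refine Submodule.subset_span ⟨Fin.snoc x b, ?_, ?_⟩
        · intro i
          induction i using Fin.lastCases with
          | last => simpa using hb
          | cast i => simpa using hxm i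
        · simp [Fin.prod_univ_castSucc]
    intro w hw
    rw [Submodule.restrictScalars_mem] at hw
    obtain ⟨d', rfl⟩ : ∃ d', d = d' + 1 := ⟨d - 1, by omega⟩
    have hw2 := hprod d' w hw
    refine Submodule.span_le.mpr ?_ hw2
    rintro a ⟨x, hx, rfl⟩
    simpa using claim (d' + 1) le_rfl x hx 0 (zero_mem _)
end

section
/- Let (A, U) be an H-pair (A a local algebra of dimension n+2 with maximal ideal m, U ⊆ m a subspace of dimension n generating A) and let F be an invariant d-linear symmetric form on A. Then the kernel Ker F = {x ∈ A : F(x, z_2,...,z_d) = 0 for all z_i ∈ A} is the maximal ideal of A contained in U. -/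
/-!
Invariance of `F` under `u` implies that multiplication by `u` preserves `Ker F`; as `U`
generates `A`, `Ker F` is an ideal, proper because `F ≠ 0`. The heart of the argument: `F` kills
every ideal `I` under whose elements it is invariant. Indeed, if `z i ∈ I`, invariance under
`z i` applied to `z` with its `i`-th entry replaced by `1` writes a positive multiple of `F z`
(characteristic zero) through values of `F` at tuples that again have an entry in `I` but fewer
entries different from `1`. This gives maximality of `Ker F` among ideals inside `U`.
If `Ker F ⊄ U`, counting dimensions gives `U + Ker F = m` and `A = K·1 ⊕ m`. Invariance under
`Ker F` is automatic, so `F` is invariant under `m`, hence `m ⊆ Ker F`, and then `F` is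
determined by `F (1, …, 1) = 0`, i.e. `F = 0`.
-/

open Function

namespace Submodule

variable {K V : Type*} [Field K] [AddCommGroup V] [Module K V] [FiniteDimensional K V]

theorem eq_and_finrank_add_one_of_lt_of_le {U W M : Submodule K V} (hUW : U < W) (hWM : W ≤ M)
    (hM : M ≠ ⊤) (hU : Module.finrank K V = Module.finrank K U + 2) :
    W = M ∧ Module.finrank K M + 1 = Module.finrank K V := by
  have hUW' := finrank_lt_finrank_of_lt hUW
  have hWM' := finrank_mono hWM
  have hM' := finrank_lt hM
  exact ⟨eq_of_le_of_finrank_le hWM (by omega), by omega⟩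

theorem sup_span_singleton_eq_top_of_finrank_add_one {M : Submodule K V} {v : V} (hv : v ∉ M)
    (hM : Module.finrank K M + 1 = Module.finrank K V) : M ⊔ K ∙ v = ⊤ := by
  have hlt := finrank_lt_finrank_of_lt (left_lt_sup.2 (mt (span_singleton_le_iff_mem v M).1 hv))
  exact eq_top_of_finrank_eq (le_antisymm (finrank_le _) (by omega))

end Submodule

theorem Function.update_update_one_eq_comp_swap {ι M : Type*} [DecidableEq ι] [One M]
    {z : ι → M} {i j : ι} (hji : j ≠ i) (hj : z j = 1) :
    update (update z i 1) j (z i) = z ∘ Equiv.swap j i := by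
  rw [Equiv.comp_swap_eq_update, hj, update_comm hji.symm]

namespace MultilinearMap

variable {K A ι : Type*} [Field K] [CommRing A] [Algebra K A] [DecidableEq ι]
  (F : MultilinearMap K (fun _ : ι => A) K)

def kernel : Submodule K A where
  carrier := {x | ∀ (z : ι → A) (i : ι), F (update z i x) = 0}
  add_mem' {x y} hx hy z i := by rw [F.map_update_add, hx, hy, add_zero]
  zero_mem' z i := F.map_update_zero z i
  smul_mem' c x hx z i := by rw [F.map_update_smul, hx, smul_zero]

variable {F}

theorem mem_kernel_iff_of_symm (hsym : ∀ (σ : Equiv.Perm ι) (z : ι → A), F (z ∘ σ) = F z)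
    {x : A} (i₀ : ι) : x ∈ F.kernel ↔ ∀ z, F (update z i₀ x) = 0 := by
  refine ⟨fun hx z => hx z i₀, fun hx z i => ?_⟩
  rw [← hsym (Equiv.swap i₀ i), update_comp_equiv, Equiv.symm_swap, Equiv.swap_apply_right]
  exact hx _

theorem kernel_eq_top_iff [Nonempty ι] : F.kernel = ⊤ ↔ F = 0 := by
  refine ⟨fun h => MultilinearMap.ext fun z => ?_, fun h => ?_⟩
  · obtain ⟨i⟩ := ‹Nonempty ι›
    simpa using (h ▸ Submodule.mem_top : z i ∈ F.kernel) z i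
  · subst h
    exact eq_top_iff.2 fun x _ z i => rfl

variable [Fintype ι]

variable (F) in
def invariantSubmodule : Submodule K A where
  carrier := {u | ∀ z : ι → A, ∑ i, F (update z i (u * z i)) = 0}
  add_mem' {u v} hu hv z := by
    simp only [add_mul, F.map_update_add, Finset.sum_add_distrib, hu z, hv z, add_zero]
  zero_mem' z := by simp only [zero_mul, F.map_update_zero, Finset.sum_const_zero]
  smul_mem' c u hu z := by
    simp only [smul_mul_assoc, F.map_update_smul, ← Finset.smul_sum, hu z, smul_zero]

theorem mul_mem_kernel {u x : A} (hu : u ∈ F.invariantSubmodule) (hx : x ∈ F.kernel) :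
    u * x ∈ F.kernel := by
  intro z i
  have h := hu (update z i x)
  rwa [Finset.sum_eq_single i (fun j _ hji => by rw [update_comm hji.symm]; exact hx _ i)
    (by simp), update_self, update_idem] at h

theorem mul_mem_kernel_of_adjoin_eq_top
    (hgen : Algebra.adjoin K (F.invariantSubmodule : Set A) = ⊤) (a : A) {x : A}
    (hx : x ∈ F.kernel) : a * x ∈ F.kernel := by
  have ha : a ∈ Algebra.adjoin K (F.invariantSubmodule : Set A) := hgen ▸ Algebra.mem_top
  induction ha using Algebra.adjoin_induction generalizing x with
  | mem u hu => exact mul_mem_kernel hu hx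
  | algebraMap c => simpa only [Algebra.algebraMap_eq_smul_one, smul_mul_assoc, one_mul]
      using F.kernel.smul_mem c hx
  | add p q _ _ hp hq => simpa only [add_mul] using F.kernel.add_mem (hp hx) (hq hx)
  | mul p q _ _ hp hq => simpa only [mul_assoc] using hp (hq hx)

def kernelIdeal (hgen : Algebra.adjoin K (F.invariantSubmodule : Set A) = ⊤) : Ideal A where
  toAddSubmonoid := F.kernel.toAddSubmonoid
  smul_mem' a _ hx := mul_mem_kernel_of_adjoin_eq_top hgen a hx

theorem restrictScalars_kernelIdeal (hgen : Algebra.adjoin K (F.invariantSubmodule : Set A) = ⊤) :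
    (F.kernelIdeal hgen).restrictScalars K = F.kernel :=
  rfl

theorem kernelIdeal_eq_top_iff [Nonempty ι]
    (hgen : Algebra.adjoin K (F.invariantSubmodule : Set A) = ⊤) :
    F.kernelIdeal hgen = ⊤ ↔ F = 0 := by
  rw [← kernel_eq_top_iff, ← restrictScalars_kernelIdeal hgen,
    Submodule.restrictScalars_eq_top_iff]

theorem restrictScalars_le_invariantSubmodule {I : Ideal A}
    (hI : I.restrictScalars K ≤ F.kernel) :
    I.restrictScalars K ≤ F.invariantSubmodule := fun _ hu z =>
  Finset.sum_eq_zero fun i _ => hI (I.mul_mem_right (z i) hu) z i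

theorem eq_zero_of_kernel_sup_span_one_eq_top (htop : F.kernel ⊔ K ∙ 1 = ⊤)
    (hone : F (fun _ => 1) = 0) : F = 0 := by
  ext z
  induction hn : (mulSupport z).ncard using Nat.strong_induction_on generalizing z with
  | _ n ih =>
    obtain hz | ⟨i, hi⟩ := (mulSupport z).eq_empty_or_nonempty
    · rw [mulSupport_eq_empty_iff.1 hz]
      exact hone
    obtain ⟨y, hy, _, hc, hyc⟩ := Submodule.mem_sup.1 (htop ▸ Submodule.mem_top : z i ∈ _)
    obtain ⟨c, rfl⟩ := Submodule.mem_span_singleton.1 hc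
    have hlt : (mulSupport (update z i 1)).ncard < n := by
      rw [← hn, mulSupport_update_one]
      exact Set.ncard_sdiff_singleton_lt_of_mem hi
    rw [← update_eq_self i z, ← hyc, F.map_update_add, F.map_update_smul, hy, ih _ hlt _ rfl]
    simp

variable [CharZero K] (hsym : ∀ (σ : Equiv.Perm ι) (z : ι → A), F (z ∘ σ) = F z)
include hsym

theorem eq_zero_of_mem_invariantSubmodule {z : ι → A} {i : ι}
    (hz : z i ∈ F.invariantSubmodule)
    (hside : ∀ j ≠ i, z j ≠ 1 → F (update (update z i 1) j (z i * z j)) = 0) : F z = 0 := by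
  classical
  have hterm : ∀ j, F (update (update z i 1) j (z i * update z i 1 j)) =
      if j = i ∨ z j = 1 then F z else 0 := by
    intro j
    rcases eq_or_ne j i with rfl | hji
    · simp
    · rw [update_of_ne hji]
      by_cases hj : z j = 1
      · rw [if_pos (Or.inr hj), hj, mul_one, update_update_one_eq_comp_swap hji hj, hsym]
      · rw [if_neg (by tauto)]
        exact hside j hji hj
  have h := hz (update z i 1)
  simp only [hterm, Finset.sum_ite, Finset.sum_const, smul_zero, add_zero] at h
  exact (smul_eq_zero.1 h).resolve_left (Finset.card_ne_zero_of_mem (a := i) (by simp))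

theorem restrictScalars_le_kernel {I : Ideal A}
    (hI : I.restrictScalars K ≤ F.invariantSubmodule) : I.restrictScalars K ≤ F.kernel := by
  suffices h : ∀ (z : ι → A) (i : ι), z i ∈ I → F z = 0 from
    fun x hx z i => h _ i (by rwa [update_self])
  intro z i hz
  induction hn : (mulSupport (update z i 1)).ncard using Nat.strong_induction_on
    generalizing z i with
  | _ n ih =>
    refine eq_zero_of_mem_invariantSubmodule hsym (hI hz) fun j hji hj => ?_
    refine ih _ ?_ _ j (by rw [update_self]; exact I.mul_mem_right _ hz) rfl
    have hj' : j ∈ mulSupport (update z i 1) := by simpa [update_of_ne hji] using hj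
    rw [← hn, update_idem, mulSupport_update_one]
    exact Set.ncard_sdiff_singleton_lt_of_mem hj'

end MultilinearMap

open IsLocalRing MultilinearMap

theorem kernel_of_invariant_form_is_maximal_ideal_in_U_general
    {K A : Type*} [Field K] [CharZero K]
    [CommRing A] [Algebra K A] [FiniteDimensional K A] [IsLocalRing A]
    {n d : ℕ} (hd : 0 < d)
    (hA : Module.finrank K A = n + 2)
    (U : Submodule K A)
    (hU : U ≤ Submodule.restrictScalars K (IsLocalRing.maximalIdeal A))
    (hUdim : Module.finrank K U = n)
    (hgen : Algebra.adjoin K (U : Set A) = ⊤)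
    (F : MultilinearMap K (fun _ : Fin d => A) K)
    (hF0 : F ≠ 0)
    (hsym : ∀ (σ : Equiv.Perm (Fin d)) (z : Fin d → A), F (z ∘ σ) = F z)
    (hone : F (fun _ => 1) = 0)
    (hinv : ∀ u ∈ U, ∀ z : Fin d → A,
      ∑ i, F (Function.update z i (u * z i)) = 0) :
    ∃ J : Ideal A,
      (J : Set A) =
        {x : A | ∀ z : Fin d → A, F (Function.update z ⟨0, hd⟩ x) = 0} ∧
      Submodule.restrictScalars K J ≤ U ∧
      ∀ J' : Ideal A, Submodule.restrictScalars K J' ≤ U → J' ≤ J := by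
  have hUinv : U ≤ F.invariantSubmodule := hinv
  have hgen' : Algebra.adjoin K (F.invariantSubmodule : Set A) = ⊤ :=
    top_le_iff.1 (hgen ▸ Algebra.adjoin_mono hUinv)
  refine ⟨F.kernelIdeal hgen', Set.ext fun x => mem_kernel_iff_of_symm hsym ⟨0, hd⟩,
    ?_, fun J' hJ' => restrictScalars_le_kernel hsym (hJ'.trans hUinv)⟩
  by_contra hJU
  have : Nonempty (Fin d) := ⟨⟨0, hd⟩⟩
  have hJm : F.kernelIdeal hgen' ≤ maximalIdeal A :=
    le_maximalIdeal ((kernelIdeal_eq_top_iff hgen').not.2 hF0)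
  have h1m : (1 : A) ∉ (maximalIdeal A).restrictScalars K := fun h =>
    (maximalIdeal.isMaximal A).ne_top ((Ideal.eq_top_iff_one _).2 h)
  obtain ⟨hsup, hrank⟩ := Submodule.eq_and_finrank_add_one_of_lt_of_le (left_lt_sup.2 hJU)
    (sup_le hU hJm) (fun h => h1m (h ▸ Submodule.mem_top)) (by rw [hA, hUdim])
  have hmker : (maximalIdeal A).restrictScalars K ≤ F.kernel :=
    restrictScalars_le_kernel hsym
      (hsup ▸ sup_le hUinv (restrictScalars_le_invariantSubmodule le_rfl))
  have htop : F.kernel ⊔ K ∙ 1 = ⊤ := top_le_iff.1 <|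
    Submodule.sup_span_singleton_eq_top_of_finrank_add_one h1m hrank ▸ sup_le_sup_right hmker _
  exact hF0 (eq_zero_of_kernel_sup_span_one_eq_top htop hone)

/-- Let `(A, U)` be an H-pair (`A` a local commutative associative unital
algebra of dimension `n+2` with maximal ideal `m`, `U ⊆ m` a subspace of
dimension `n` generating `A`) and let `F` be a nonzero invariant symmetric
`d`-linear form on `A`.  Then the kernel
`Ker F = {x ∈ A : F(x, z₂,…,z_d) = 0 ∀ zᵢ ∈ A}` is the maximal ideal of `A`
contained in `U`. -/
theorem kernel_of_invariant_form_is_maximal_ideal_in_U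
    {K A : Type*} [Field K] [IsAlgClosed K] [CharZero K]
    [CommRing A] [Algebra K A] [FiniteDimensional K A] [IsLocalRing A]
    {n d : ℕ} (hd : 0 < d)
    (hA : Module.finrank K A = n + 2)
    (U : Submodule K A)
    (hU : U ≤ Submodule.restrictScalars K (IsLocalRing.maximalIdeal A))
    (hUdim : Module.finrank K U = n)
    (hgen : Algebra.adjoin K (U : Set A) = ⊤)
    (F : MultilinearMap K (fun _ : Fin d => A) K)
    (hF0 : F ≠ 0)
    (hsym : ∀ (σ : Equiv.Perm (Fin d)) (z : Fin d → A), F (z ∘ σ) = F z)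
    (hone : F (fun _ => 1) = 0)
    (hinv : ∀ u ∈ U, ∀ z : Fin d → A,
      ∑ i, F (Function.update z i (u * z i)) = 0) :
    ∃ J : Ideal A,
      (J : Set A) =
        {x : A | ∀ z : Fin d → A, F (Function.update z ⟨0, hd⟩ x) = 0} ∧
      Submodule.restrictScalars K J ≤ U ∧
      ∀ J' : Ideal A, Submodule.restrictScalars K J' ≤ U → J' ≤ J :=
  kernel_of_invariant_form_is_maximal_ideal_in_U_general hd hA U hU hUdim hgen F hF0 hsym hone hinv
end

section
/- Let U ⊆ m be a subspace of the maximal ideal of a finite-dimensional local commutative associative unital algebra A. Then U contains no nonzero ideal of A if and only if (Soc A) ∩ U = 0. Consequently, if (A,U) is an H-pair corresponding to an induced additive action on a non-degenerate hypersurface of degree d in P^{n+1}, then A is Gorenstein with Soc A = m^d and m = U ⊕ m^d. -/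
open IsLocalRing

section aux
variable {K A : Type*} [Field K] [IsAlgClosed K]
  [CommRing A] [Algebra K A] [FiniteDimensional K A] [IsLocalRing A]

omit [IsAlgClosed K] [FiniteDimensional K A] in
lemma mem_socle_iff (z : A) :
    z ∈ socle K A ↔ ∀ u ∈ maximalIdeal A, u * z = 0 := by
  simp [socle, Submodule.mem_iInf, LinearMap.mem_ker, Subtype.forall]

omit [IsAlgClosed K] in
include K in
lemma max_nilpotent : ∃ N, (maximalIdeal A) ^ N = ⊥ := by
  have : IsArtinianRing A := isArtinian_of_tower K inferInstance
  obtain ⟨N, hN⟩ := IsArtinianRing.isNilpotent_jacobson_bot (R := A)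
  refine ⟨N, ?_⟩
  rw [← jacobson_eq_maximalIdeal (⊥ : Ideal A) bot_ne_top, hN]; rfl

omit [IsAlgClosed K] [FiniteDimensional K A] in
lemma residue_algebraMap (c : K) :
    residue A (algebraMap K A c) = algebraMap K (ResidueField A) c := rfl

/-- residue as a `K`-linear map. -/
noncomputable def resL (K A : Type*) [Field K] [CommRing A] [Algebra K A]
    [IsLocalRing A] : A →ₗ[K] ResidueField A where
  toFun := residue A
  map_add' _ _ := map_add _ _ _
  map_smul' c a := by
    simp only [RingHom.id_apply, Algebra.smul_def, map_mul, residue_algebraMap]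

lemma residue_bij : Function.Bijective (algebraMap K (ResidueField A)) := by
  have : Module.Finite K (ResidueField A) :=
    Module.Finite.of_surjective (resL K A) Ideal.Quotient.mk_surjective
  have : Algebra.IsIntegral K (ResidueField A) := Algebra.IsIntegral.of_finite K _
  exact ⟨(algebraMap K (ResidueField A)).injective,
    IsAlgClosed.algebraMap_bijective_of_isIntegral.2⟩

lemma exists_residue (a : A) : ∃ c : K, a - algebraMap K A c ∈ maximalIdeal A := by
  obtain ⟨c, hc⟩ := (residue_bij (K := K) (A := A)).2 (residue A a)
  refine ⟨c, ?_⟩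
  have h : residue A (a - algebraMap K A c) = 0 := by
    rw [map_sub, residue_algebraMap, hc, sub_self]
  exact Ideal.Quotient.eq_zero_iff_mem.mp h

lemma finrank_resfield : Module.finrank K (ResidueField A) = 1 := by
  have e := LinearEquiv.ofBijective (Algebra.linearMap K (ResidueField A))
    (residue_bij (K := K) (A := A))
  rw [← e.finrank_eq, Module.finrank_self]

lemma finrank_max (h : Module.finrank K A = n + 2) :
    Module.finrank K (Submodule.restrictScalars K (maximalIdeal A)) = n + 1 := by
  have hker : LinearMap.ker (resL K A) = Submodule.restrictScalars K (maximalIdeal A) := by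
    ext a
    simp only [LinearMap.mem_ker, Submodule.restrictScalars_mem]
    exact Ideal.Quotient.eq_zero_iff_mem
  have hrange : LinearMap.range (resL K A) = ⊤ :=
    LinearMap.range_eq_top.mpr Ideal.Quotient.mk_surjective
  have := LinearMap.finrank_range_add_finrank_ker (resL K A)
  rw [hker, hrange, h] at this
  have h1 : Module.finrank K (⊤ : Submodule K (ResidueField A)) = 1 := by
    rw [finrank_top]; exact finrank_resfield
  omega

lemma part1 (U' : Submodule K A)
    (hU' : U' ≤ Submodule.restrictScalars K (maximalIdeal A)) :
    (∀ J : Ideal A, Submodule.restrictScalars K J ≤ U' → J = ⊥) ↔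
      socle K A ⊓ U' = ⊥ := by
  constructor
  · intro h
    rw [eq_bot_iff]
    rintro z ⟨hzs, hzU⟩
    have hz : ∀ u ∈ maximalIdeal A, u * z = 0 := (mem_socle_iff z).mp hzs
    have hJ : Submodule.restrictScalars K (Ideal.span {z}) ≤ U' := by
      intro a ha
      rw [Submodule.restrictScalars_mem, Ideal.mem_span_singleton'] at ha
      obtain ⟨b, rfl⟩ := ha
      obtain ⟨c, hc⟩ := exists_residue (K := K) b
      have : b * z = c • z := by
        have h0 := hz _ hc
        rw [sub_mul] at h0
        have : b * z = algebraMap K A c * z := by linear_combination h0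
        rw [this, Algebra.smul_def]
      rw [this]
      exact U'.smul_mem c hzU
    have := h _ hJ
    have hzz : z ∈ (⊥ : Ideal A) := this ▸ Ideal.subset_span rfl
    simpa using hzz
  · intro h J hJ
    rw [eq_bot_iff]
    intro x hx
    by_contra hx0
    obtain ⟨N, hN⟩ := max_nilpotent (K := K) (A := A)
    have hPN : ∀ y ∈ (maximalIdeal A) ^ N, y * x = 0 := by
      intro y hy; rw [hN] at hy; simp [Ideal.mem_bot.mp hy]
    classical
    let P : ℕ → Prop := fun k => ∀ y ∈ (maximalIdeal A) ^ k, y * x = 0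
    have hex : ∃ k, P k := ⟨N, hPN⟩
    let k := Nat.find hex
    have hk : P k := Nat.find_spec hex
    have hk0 : k ≠ 0 := by
      intro h0
      have := hk 1 (by rw [h0, pow_zero, Ideal.one_eq_top]; trivial)
      rw [one_mul] at this
      exact hx0 this
    have hkm : ¬ P (k - 1) := Nat.find_min hex (by omega)
    obtain ⟨y, hy, hyx⟩ : ∃ y ∈ (maximalIdeal A) ^ (k - 1), y * x ≠ 0 := by
      by_contra hc; push_neg at hc; exact hkm hc
    set z := y * x with hzdef
    have hzs : z ∈ socle K A := by
      rw [mem_socle_iff]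
      intro u hu
      have huy : u * y ∈ (maximalIdeal A) ^ k := by
        have : (maximalIdeal A) ^ k = maximalIdeal A * (maximalIdeal A) ^ (k - 1) := by
          conv_lhs => rw [show k = 1 + (k - 1) by omega]
          rw [pow_add, pow_one]
        rw [this]
        exact Ideal.mul_mem_mul hu hy
      calc u * z = (u * y) * x := by ring
        _ = 0 := hk _ huy
    have hzU : z ∈ U' := hJ (by
      rw [Submodule.restrictScalars_mem]
      exact Ideal.mul_mem_left _ y hx)
    have : z ∈ socle K A ⊓ U' := ⟨hzs, hzU⟩
    rw [h] at this
    exact hyx (by simpa using this)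


end aux

/-- A subspace `U'` of the maximal ideal of a finite-dimensional local algebra
`A` contains no nonzero ideal of `A` if and only if `(Soc A) ∩ U' = 0`.
Consequently, if `(A, U)` is an H-pair corresponding to an induced additive
action on a non-degenerate hypersurface of degree `d` in `P^{n+1}` (so `U`
contains no nonzero ideal, `m^d ⊄ U` and `m^{d+1} ⊆ U`), then `A` is
Gorenstein with `Soc A = m^d` and `m = U ⊕ m^d`. -/
theorem no_ideal_iff_socle_disjoint_and_gorenstein
    {K A : Type*} [Field K] [IsAlgClosed K] [CharZero K]
    [CommRing A] [Algebra K A] [FiniteDimensional K A] [IsLocalRing A]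
    {n d : ℕ}
    (hA : Module.finrank K A = n + 2)
    (U : Submodule K A)
    (hU : U ≤ Submodule.restrictScalars K (IsLocalRing.maximalIdeal A))
    (hUdim : Module.finrank K U = n)
    (hgen : Algebra.adjoin K (U : Set A) = ⊤) :
    (∀ U' : Submodule K A,
      U' ≤ Submodule.restrictScalars K (IsLocalRing.maximalIdeal A) →
      ((∀ J : Ideal A, Submodule.restrictScalars K J ≤ U' → J = ⊥) ↔
        socle K A ⊓ U' = ⊥)) ∧
    ((∀ J : Ideal A, Submodule.restrictScalars K J ≤ U → J = ⊥) →
      ¬ (Submodule.restrictScalars K ((IsLocalRing.maximalIdeal A) ^ d) ≤ U) →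
      (Submodule.restrictScalars K ((IsLocalRing.maximalIdeal A) ^ (d + 1)) ≤ U) →
      (Module.finrank K (socle K A) = 1 ∧
       socle K A = Submodule.restrictScalars K ((IsLocalRing.maximalIdeal A) ^ d) ∧
       U ⊔ Submodule.restrictScalars K ((IsLocalRing.maximalIdeal A) ^ d) =
         Submodule.restrictScalars K (IsLocalRing.maximalIdeal A) ∧
       U ⊓ Submodule.restrictScalars K ((IsLocalRing.maximalIdeal A) ^ d) = ⊥)) := by
  refine ⟨fun U' hU' => part1 U' hU', ?_⟩
  intro h hd hd1
  set Md := Submodule.restrictScalars K ((maximalIdeal A) ^ d) with hMddef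
  set M := Submodule.restrictScalars K (maximalIdeal A) with hMdef
  -- m^{d+1} = 0
  have hm1 : (maximalIdeal A) ^ (d + 1) = ⊥ := h _ hd1
  -- m^d ⊆ socle
  have hMd_soc : Md ≤ socle K A := by
    intro z hz
    rw [Submodule.restrictScalars_mem] at hz
    rw [mem_socle_iff]
    intro u hu
    have : u * z ∈ (maximalIdeal A) ^ (d + 1) := by
      rw [pow_succ']
      exact Ideal.mul_mem_mul hu hz
    rw [hm1] at this
    simpa using this
  have hMd_ne : Md ≠ ⊥ := fun hbot => hd (hbot ▸ bot_le)
  have hsU : socle K A ⊓ U = ⊥ := (part1 U hU).mp h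
  -- the maximal ideal is nonzero
  have hm_ne : maximalIdeal A ≠ ⊥ := by
    intro hbot
    have hsurj : Function.Surjective (algebraMap K A) := by
      intro a
      obtain ⟨c, hc⟩ := exists_residue (K := K) a
      rw [hbot, Ideal.mem_bot, sub_eq_zero] at hc
      exact ⟨c, hc.symm⟩
    have hbij : Function.Bijective (Algebra.linearMap K A) :=
      ⟨(algebraMap K A).injective, hsurj⟩
    have := (LinearEquiv.ofBijective (Algebra.linearMap K A) hbij).finrank_eq
    rw [Module.finrank_self, hA] at this
    omega
  -- socle ⊆ m
  have hsoc_M : socle K A ≤ M := by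
    intro a ha
    rw [mem_socle_iff] at ha
    rw [hMdef, Submodule.restrictScalars_mem]
    by_contra hnm
    have hun : IsUnit a := by
      rw [IsLocalRing.mem_maximalIdeal] at hnm; exact not_not.mp (by simpa [mem_nonunits_iff] using hnm)
    apply hm_ne
    rw [eq_bot_iff]
    intro u hu
    have h0 : a * u = a * 0 := by rw [mul_zero, mul_comm]; exact ha u hu
    rw [hun.mul_left_cancel h0]
    simp
  have hMrank : Module.finrank K M = n + 1 := finrank_max hA
  -- finrank socle = 1
  have hsup_le : socle K A ⊔ U ≤ M := sup_le hsoc_M hU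
  have hsum := Submodule.finrank_sup_add_finrank_inf_eq (socle K A) U
  rw [hsU, hUdim, finrank_bot, add_zero] at hsum
  have hle : Module.finrank K ↥(socle K A ⊔ U) ≤ n + 1 := by
    rw [← hMrank]; exact Submodule.finrank_mono hsup_le
  have hsoc_pos : Module.finrank K (socle K A) ≠ 0 := by
    intro h0
    rw [Submodule.finrank_eq_zero] at h0
    exact hMd_ne (le_bot_iff.mp (h0 ▸ hMd_soc))
  have hsoc1 : Module.finrank K (socle K A) = 1 := by omega
  -- socle = m^d
  have hMd_rank : 1 ≤ Module.finrank K Md := by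
    rcases Nat.eq_zero_or_pos (Module.finrank K Md) with h0 | h1
    · exact absurd (Submodule.finrank_eq_zero.mp h0) hMd_ne
    · exact h1
  have hsoc_eq : socle K A = Md :=
    (Submodule.eq_of_le_of_finrank_le hMd_soc (hsoc1 ▸ hMd_rank)).symm
  -- U ⊔ m^d = m
  have hsup_eq : socle K A ⊔ U = M := by
    apply Submodule.eq_of_le_of_finrank_le hsup_le
    rw [hMrank, hsum, hsoc1, add_comm]
  refine ⟨hsoc1, hsoc_eq, ?_, ?_⟩
  · rw [← hsoc_eq, sup_comm, hsup_eq]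
  · rw [← hsoc_eq, inf_comm, hsU]
end

section
/- Let g be a semisimple Lie algebra over an algebraically closed field of characteristic zero with parabolic subalgebra q, giving the grading g = ⊕_k g_k with q = ⊕_{k≥0} g_k and the nilradical of the opposite parabolic q_u^- = ⊕_{k<0} g_k. If h is a commutative Lie subalgebra of g with g = q ⊕ h (as vector spaces), then q_u^- is commutative. -/
/-!
Write `F n = ⨆ k ≥ n, g k`; by the grading `⁅F a, F b⁆ ⊆ F (a + b)`, and `F n` meets `g m`
trivially for `m < n`. Take `z ∈ g i`, `z' ∈ g j` with `i, j < 0`, and use `F 0 ⊔ h = ⊤` to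
write `z = p + y`, `z' = p' + y'` with `p, p' ∈ F 0` and `y, y' ∈ h`. As `⁅y, y'⁆ = 0`,
`⁅z, z'⁆ = ⁅p, z'⁆ + ⁅z, p'⁆ - ⁅p, p'⁆ ∈ F (min i j)`, while `⁅z, z'⁆ ∈ g (i + j)` and
`i + j < min i j`; hence `⁅z, z'⁆ = 0`, and bilinearity extends this to all of `⨆ k < 0, g k`.
-/

section GradedLie

variable {R L ι : Type*} [CommRing R] [LieRing L] [LieAlgebra R L]

theorem lie_mem_of_mem_biSup {g : ι → Submodule R L} {A B : Set ι} {N : Submodule R L}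
    (hN : ∀ i ∈ A, ∀ j ∈ B, ∀ x ∈ g i, ∀ y ∈ g j, ⁅x, y⁆ ∈ N)
    {x y : L} (hx : x ∈ ⨆ i ∈ A, g i) (hy : y ∈ ⨆ j ∈ B, g j) : ⁅x, y⁆ ∈ N := by
  let bracket : L →ₗ[R] L →ₗ[R] L := LieModule.toEnd R L L
  have hle : Submodule.map₂ bracket (⨆ i ∈ A, g i) (⨆ j ∈ B, g j) ≤ N := by
    simp only [Submodule.map₂_iSup_left, Submodule.map₂_iSup_right]
    exact iSup₂_le fun j hj => iSup₂_le fun i hi => Submodule.map₂_le.mpr (hN i hi j hj)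
  exact hle (Submodule.apply_mem_map₂ bracket hx hy)

theorem lie_add_add_of_lie_eq_zero {p y p' y' : L} (hyy' : ⁅y, y'⁆ = 0) :
    ⁅p + y, p' + y'⁆ = ⁅p, p' + y'⁆ + ⁅p + y, p'⁆ - ⁅p, p'⁆ := by
  simp only [add_lie, lie_add, hyy']
  abel

section Preorder

variable [Preorder ι]

def gradedGE (g : ι → Submodule R L) (n : ι) : Submodule R L :=
  ⨆ k ∈ {k : ι | n ≤ k}, g k

theorem mem_gradedGE_of_mem {g : ι → Submodule R L} {n k : ι} (hnk : n ≤ k) {x : L}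
    (hx : x ∈ g k) : x ∈ gradedGE g n :=
  le_iSup₂ (f := fun k (_ : k ∈ {k : ι | n ≤ k}) => g k) k hnk hx

theorem gradedGE_anti (g : ι → Submodule R L) : Antitone (gradedGE g) :=
  fun _ _ hmn => biSup_mono fun _ hk => le_trans hmn hk

theorem disjoint_gradedGE {g : ι → Submodule R L} (hg : iSupIndep g) {m n : ι} (hmn : m < n) :
    Disjoint (g m) (gradedGE g n) :=
  hg.disjoint_biSup (not_le_of_gt hmn)

theorem lie_mem_gradedGE [AddCommMonoid ι] [IsOrderedAddMonoid ι] {g : ι → Submodule R L}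
    (hbr : ∀ i j : ι, ∀ x ∈ g i, ∀ y ∈ g j, ⁅x, y⁆ ∈ g (i + j))
    {a b : ι} {x y : L} (hx : x ∈ gradedGE g a) (hy : y ∈ gradedGE g b) :
    ⁅x, y⁆ ∈ gradedGE g (a + b) :=
  lie_mem_of_mem_biSup (fun i hi j hj x hx y hy =>
    mem_gradedGE_of_mem (add_le_add hi hj) (hbr i j x hx y hy)) hx hy

end Preorder

theorem lie_eq_zero_of_neg_of_neg [AddCommMonoid ι] [LinearOrder ι] [IsOrderedCancelAddMonoid ι]
    {g : ι → Submodule R L} (hbr : ∀ i j : ι, ∀ x ∈ g i, ∀ y ∈ g j, ⁅x, y⁆ ∈ g (i + j))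
    (hg : iSupIndep g) {h : Submodule R L} (hcomm : ∀ x ∈ h, ∀ y ∈ h, ⁅x, y⁆ = (0 : L))
    (hsup : gradedGE g 0 ⊔ h = ⊤) {i j : ι} (hi : i < 0) (hj : j < 0) {z z' : L}
    (hz : z ∈ g i) (hz' : z' ∈ g j) : ⁅z, z'⁆ = 0 := by
  obtain ⟨p, hp, y, hy, rfl⟩ :=
    Submodule.mem_sup.mp (hsup ▸ Submodule.mem_top : z ∈ gradedGE g 0 ⊔ h)
  obtain ⟨p', hp', y', hy', rfl⟩ :=
    Submodule.mem_sup.mp (hsup ▸ Submodule.mem_top : z' ∈ gradedGE g 0 ⊔ h)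
  have hpz' : ⁅p, p' + y'⁆ ∈ gradedGE g (min i j) := gradedGE_anti g (min_le_right i j) <| by
    simpa only [zero_add] using lie_mem_gradedGE hbr hp (mem_gradedGE_of_mem le_rfl hz')
  have hzp' : ⁅p + y, p'⁆ ∈ gradedGE g (min i j) := gradedGE_anti g (min_le_left i j) <| by
    simpa only [add_zero] using lie_mem_gradedGE hbr (mem_gradedGE_of_mem le_rfl hz) hp'
  have hpp' : ⁅p, p'⁆ ∈ gradedGE g (min i j) := gradedGE_anti g ((min_le_left i j).trans hi.le) <| by
    simpa only [add_zero] using lie_mem_gradedGE hbr hp hp'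
  have hge : ⁅p + y, p' + y'⁆ ∈ gradedGE g (min i j) := by
    rw [lie_add_add_of_lie_eq_zero (hcomm y hy y' hy')]
    exact sub_mem (add_mem hpz' hzp') hpp'
  have hlt : i + j < min i j := lt_min (add_lt_of_neg_right i hj) (add_lt_of_neg_left j hi)
  exact Submodule.disjoint_def.mp (disjoint_gradedGE hg hlt) _ (hbr i j _ hz _ hz') hge

end GradedLie

theorem opposite_nilradical_commutative_of_commutative_complement_general
    {K L : Type*} [Field K]
    [LieRing L] [LieAlgebra K L]
    (g : ℤ → Submodule K L)
    (hbr : ∀ i j : ℤ, ∀ x ∈ g i, ∀ y ∈ g j, ⁅x, y⁆ ∈ g (i + j))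
    (hinternal : DirectSum.IsInternal g)
    (h : LieSubalgebra K L)
    (hcomm : ∀ x ∈ h, ∀ y ∈ h, ⁅x, y⁆ = (0 : L))
    (hcompl : IsCompl (⨆ k ∈ {k : ℤ | 0 ≤ k}, g k) h.toSubmodule) :
    ∀ x ∈ (⨆ k ∈ {k : ℤ | k < 0}, g k),
      ∀ y ∈ (⨆ k ∈ {k : ℤ | k < 0}, g k), ⁅x, y⁆ = (0 : L) := by
  intro x hx y hy
  have hneg : ∀ i ∈ {k : ℤ | k < 0}, ∀ j ∈ {k : ℤ | k < 0}, ∀ z ∈ g i, ∀ z' ∈ g j,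
      ⁅z, z'⁆ ∈ (⊥ : Submodule K L) := fun i hi j hj z hz z' hz' =>
    (Submodule.mem_bot K).mpr <| lie_eq_zero_of_neg_of_neg hbr hinternal.submodule_iSupIndep
      hcomm hcompl.sup_eq_top hi hj hz hz'
  exact (Submodule.mem_bot K).mp (lie_mem_of_mem_biSup hneg hx hy)

/-- Let `g` be a (finite-dimensional, semisimple) Lie algebra over an
algebraically closed field of characteristic zero, equipped with the `ℤ`-grading
`g = ⊕_k g_k` coming from a parabolic subalgebra `q = ⊕_{k≥0} g_k`, with
opposite nilradical `q_u^- = ⊕_{k<0} g_k`.  If `h` is a commutative Lie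
subalgebra with `g = q ⊕ h` as vector spaces, then `q_u^-` is commutative. -/
theorem opposite_nilradical_commutative_of_commutative_complement
    {K L : Type*} [Field K] [IsAlgClosed K] [CharZero K]
    [LieRing L] [LieAlgebra K L] [FiniteDimensional K L]
    [LieAlgebra.IsSemisimple K L]
    (g : ℤ → Submodule K L)
    (hbr : ∀ i j : ℤ, ∀ x ∈ g i, ∀ y ∈ g j, ⁅x, y⁆ ∈ g (i + j))
    (hinternal : DirectSum.IsInternal g)
    (h : LieSubalgebra K L)
    (hcomm : ∀ x ∈ h, ∀ y ∈ h, ⁅x, y⁆ = (0 : L))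
    (hcompl : IsCompl (⨆ k ∈ {k : ℤ | 0 ≤ k}, g k) h.toSubmodule) :
    ∀ x ∈ (⨆ k ∈ {k : ℤ | k < 0}, g k),
      ∀ y ∈ (⨆ k ∈ {k : ℤ | k < 0}, g k), ⁅x, y⁆ = (0 : L) :=
  opposite_nilradical_commutative_of_commutative_complement_general g hbr hinternal h hcomm hcompl
end

section
/- Let Σ be a complete fan in N_Q ≅ Q^n whose rays have primitive generators p_1,...,p_m. Then Σ admits a complete collection of Demazure roots e_1,...,e_n (⟨p_i, e_j⟩ = -δ_{ij} for 1 ≤ i,j ≤ n) if and only if, after renumbering, p_1,...,p_n form a basis of the lattice N and each remaining primitive generator p_j (j > n) has all coordinates non-positive in this basis. -/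
/-!
If `⟨p_{r i}, e_j⟩ = -δ_{ij}`, the matrix with rows `p_{r i}` has a two-sided inverse over `ℤ`
(the columns `-e_j`), so the `p_{r i}` form a basis whose coordinate functionals are
`-⟨·, e_j⟩`. The Demazure inequalities at the remaining rays then say exactly that their
coordinates are non-positive. Conversely, for a basis `B` of `ℤⁿ` the coordinate functionals
are pairings with the rows of the matrix expressing the standard basis in `B`, and their
negatives are the roots.
-/

/-- `e ∈ M` is a Demazure root of the (complete) fan with primitive ray
generators `p_1,…,p_m`, with distinguished ray `ρ`: `⟨p_ρ, e⟩ = -1` and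
`⟨p_{ρ'}, e⟩ ≥ 0` for every other ray `ρ'`. -/
def IsDemazureRoot {n m : ℕ} (p : Fin m → (Fin n → ℤ)) (ρ : Fin m)
    (e : Fin n → ℤ) : Prop :=
  dotProduct (p ρ) e = -1 ∧
  ∀ ρ' : Fin m, ρ' ≠ ρ → 0 ≤ dotProduct (p ρ') e

open Matrix

lemma Module.Basis.repr_apply_eq_dotProduct {R ι κ : Type*} [CommSemiring R] [Fintype ι]
    [Finite κ] (B : Module.Basis κ R (ι → R)) (v : ι → R) (j : κ) :
    B.repr v j = B.toMatrix (Pi.basisFun R ι) j ⬝ᵥ v := by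
  rw [← (Pi.basisFun R ι).toMatrix_mulVec_repr B v]
  rfl

lemma exists_basis_of_dotProduct_eq_ite {R ι : Type*} [CommRing R] [Fintype ι] [DecidableEq ι]
    (b d : ι → ι → R) (h : ∀ i j, b i ⬝ᵥ d j = if i = j then 1 else 0) :
    ∃ B : Module.Basis ι R (ι → R), (∀ i, B i = b i) ∧ ∀ v i, B.repr v i = d i ⬝ᵥ v := by
  have hbd : of b * (of d)ᵀ = 1 := by
    ext i j
    simpa [mul_apply, one_apply, dotProduct] using h i j
  have hdbT : of d * (of b)ᵀ = 1 := by simpa using congrArg transpose hbd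
  have hbTd : (of b)ᵀ * of d = 1 := by simpa using congrArg transpose (mul_eq_one_comm.mp hbd)
  let coords : (ι → R) ≃ₗ[R] (ι → R) := LinearEquiv.ofLinearMap (toLin' (of d)) (toLin' (of b)ᵀ)
    (by rw [← toLin'_mul, hdbT, toLin'_one]) (by rw [← toLin'_mul, hbTd, toLin'_one])
  refine ⟨.ofEquivFun coords, fun i => ?_, fun v i => ?_⟩
  · simp [Module.Basis.coe_ofEquivFun, coords]
  · rw [Module.Basis.ofEquivFun_repr_apply]
    rfl

lemma isDemazureRoot_neg_toMatrix_row {n m : ℕ} (hnm : n ≤ m) (p : Fin m → Fin n → ℤ)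
    (σ : Equiv.Perm (Fin m)) (B : Module.Basis (Fin n) ℤ (Fin n → ℤ))
    (hB : ∀ i, B i = p (σ (Fin.castLE hnm i)))
    (hcoord : ∀ j : Fin m, n ≤ (j : ℕ) → ∀ i, B.repr (p (σ j)) i ≤ 0) (j : Fin n) :
    IsDemazureRoot p (σ (Fin.castLE hnm j)) (-B.toMatrix (Pi.basisFun ℤ (Fin n)) j) := by
  have hpair : ∀ v, v ⬝ᵥ -B.toMatrix (Pi.basisFun ℤ (Fin n)) j = -B.repr v j := fun v => by
    rw [dotProduct_neg, dotProduct_comm, B.repr_apply_eq_dotProduct]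
  refine ⟨by rw [hpair, ← hB, B.repr_self, Finsupp.single_eq_same], fun ρ hρ => ?_⟩
  obtain ⟨k, rfl⟩ := σ.surjective ρ
  rw [hpair, neg_nonneg]
  by_cases hk : (k : ℕ) < n
  · have hk' : k = Fin.castLE hnm ⟨k, hk⟩ := rfl
    rw [hk'] at hρ ⊢
    rw [← hB, B.repr_self, Finsupp.single_eq_of_ne]
    rintro rfl
    exact hρ rfl
  · exact hcoord k (not_lt.mp hk) j

theorem complete_collection_iff_basis_with_nonpositive_coords_general
    {n m : ℕ} (hnm : n ≤ m) (p : Fin m → (Fin n → ℤ)) :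
    (∃ (r : Fin n → Fin m) (e : Fin n → (Fin n → ℤ)),
        Function.Injective r ∧
        (∀ j : Fin n, IsDemazureRoot p (r j) (e j)) ∧
        (∀ i j : Fin n,
          dotProduct (p (r i)) (e j) = if i = j then -1 else 0)) ↔
    (∃ (σ : Equiv.Perm (Fin m)) (B : Module.Basis (Fin n) ℤ (Fin n → ℤ)),
        (∀ i : Fin n, B i = p (σ (Fin.castLE hnm i))) ∧
        ∀ j : Fin m, n ≤ (j : ℕ) → ∀ i : Fin n, B.repr (p (σ j)) i ≤ 0) := by
  constructor
  · rintro ⟨r, e, hr, hroot, hpair⟩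
    obtain ⟨B, hBr, hrepr⟩ := exists_basis_of_dotProduct_eq_ite (fun i => p (r i))
      (fun j => -e j) fun i j => by rw [dotProduct_neg, hpair]; split_ifs <;> simp
    obtain ⟨σ, hσ⟩ :=
      Equiv.Perm.exists_extending_pair _ r (Fin.castLE_injective hnm) hr
    refine ⟨σ, B, fun i => by rw [hBr, hσ], fun j hj i => ?_⟩
    have hne : σ j ≠ r i := by
      rw [← hσ, σ.injective.ne_iff, ← Fin.val_ne_iff, Fin.val_castLE]
      omega
    rw [hrepr, neg_dotProduct, dotProduct_comm, neg_nonpos]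
    exact (hroot i).2 _ hne
  · rintro ⟨σ, B, hB, hcoord⟩
    refine ⟨fun i => σ (Fin.castLE hnm i), fun j => -B.toMatrix (Pi.basisFun ℤ (Fin n)) j,
      σ.injective.comp (Fin.castLE_injective hnm),
      isDemazureRoot_neg_toMatrix_row hnm p σ B hB hcoord, fun i j => ?_⟩
    rw [dotProduct_neg, dotProduct_comm, ← B.repr_apply_eq_dotProduct, ← hB, B.repr_self,
      Finsupp.single_apply]
    split_ifs <;> simp

/-- A complete fan in `N_ℚ ≅ ℚ^n` with primitive ray generators `p_1,…,p_m`
admits a complete collection of Demazure roots `e_1,…,e_n`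
(`⟨p_i, e_j⟩ = -δ_{ij}`) if and only if, after renumbering, `p_1,…,p_n` form a
basis of the lattice `N` and each remaining generator `p_j` (`j > n`) has all
coordinates non-positive in this basis. -/
theorem complete_collection_iff_basis_with_nonpositive_coords
    {n m : ℕ} (hnm : n ≤ m) (p : Fin m → (Fin n → ℤ))
    (hp : Function.Injective p) :
    (∃ (r : Fin n → Fin m) (e : Fin n → (Fin n → ℤ)),
        Function.Injective r ∧
        (∀ j : Fin n, IsDemazureRoot p (r j) (e j)) ∧
        (∀ i j : Fin n,
          dotProduct (p (r i)) (e j) = if i = j then -1 else 0)) ↔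
    (∃ (σ : Equiv.Perm (Fin m)) (B : Module.Basis (Fin n) ℤ (Fin n → ℤ)),
        (∀ i : Fin n, B i = p (σ (Fin.castLE hnm i))) ∧
        ∀ j : Fin m, n ≤ (j : ℕ) → ∀ i : Fin n, B.repr (p (σ j)) i ≤ 0) :=
  complete_collection_iff_basis_with_nonpositive_coords_general hnm p
end

section
/- Let Σ be the fan of a complete toric variety admitting an additive action, with primitive ray generators p_1,...,p_n forming a basis of N and p_j = -Σ_i α_{ji} p_i for j > n with all α_{ji} ≥ 0. Then for each 1 ≤ i ≤ n, the set R_i of Demazure roots with distinguished ray ρ_i is contained in -p_i^* + Σ_{l≠i} Z_{≥0} p_l^*, and the vector -p_i^* belongs to R_i. -/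
/-! The root `-p_i^*` is realized as `(dotProductEquiv ℤ (Fin n)).symm (-B.coord i)`: it vanishes
on the basis rays other than `ρ_i` and takes the value `α_{ji} ≥ 0` on `p_j` for `j > n`. -/

theorem dotProduct_dotProductEquiv_symm {R ι : Type*} [CommSemiring R] [Fintype ι]
    [DecidableEq ι] (f : Module.Dual R (ι → R)) (v : ι → R) :
    v ⬝ᵥ (dotProductEquiv R ι).symm f = f v := by
  rw [dotProduct_comm]
  exact LinearMap.congr_fun ((dotProductEquiv R ι).apply_symm_apply f) v

theorem dotProduct_dotProductEquiv_symm_neg_coord {n : ℕ}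
    (B : Module.Basis (Fin n) ℤ (Fin n → ℤ)) (i l : Fin n) :
    B l ⬝ᵥ (dotProductEquiv ℤ (Fin n)).symm (-B.coord i) = if l = i then -1 else 0 := by
  rw [dotProduct_dotProductEquiv_symm, LinearMap.neg_apply, Module.Basis.coord_apply,
    Module.Basis.repr_self, Finsupp.single_apply]
  split_ifs <;> rfl

theorem isDemazureRoot_neg_coord {n m : ℕ} (hnm : n ≤ m) (p : Fin m → (Fin n → ℤ))
    (B : Module.Basis (Fin n) ℤ (Fin n → ℤ))
    (hB : ∀ i : Fin n, B i = p (Fin.castLE hnm i))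
    (hα : ∀ j : Fin m, n ≤ (j : ℕ) → ∀ i : Fin n, B.repr (p j) i ≤ 0) (i : Fin n) :
    IsDemazureRoot p (Fin.castLE hnm i) ((dotProductEquiv ℤ (Fin n)).symm (-B.coord i)) := by
  refine ⟨by rw [← hB, dotProduct_dotProductEquiv_symm_neg_coord, if_pos rfl],
    fun ρ hρ => ?_⟩
  by_cases hlt : (ρ : ℕ) < n
  · have hρ_eq : ρ = Fin.castLE hnm ⟨ρ, hlt⟩ := rfl
    have hl : (⟨ρ, hlt⟩ : Fin n) ≠ i := fun h => hρ (hρ_eq.trans (congrArg _ h))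
    rw [hρ_eq, ← hB, dotProduct_dotProductEquiv_symm_neg_coord, if_neg hl]
  · rw [dotProduct_dotProductEquiv_symm, LinearMap.neg_apply, Module.Basis.coord_apply,
      Left.nonneg_neg_iff]
    exact hα ρ (not_lt.mp hlt) i

theorem roots_structure_of_additive_action_fan_general
    {n m : ℕ} (hnm : n ≤ m) (p : Fin m → (Fin n → ℤ))
    (B : Module.Basis (Fin n) ℤ (Fin n → ℤ))
    (hB : ∀ i : Fin n, B i = p (Fin.castLE hnm i))
    (hα : ∀ j : Fin m, n ≤ (j : ℕ) → ∀ i : Fin n, B.repr (p j) i ≤ 0)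
    (i : Fin n) :
    (∀ e : Fin n → ℤ, IsDemazureRoot p (Fin.castLE hnm i) e →
      (dotProduct (B i) e = -1 ∧
        ∀ l : Fin n, l ≠ i → 0 ≤ dotProduct (B l) e)) ∧
    (∃ e : Fin n → ℤ,
      (∀ l : Fin n, dotProduct (B l) e = if l = i then -1 else 0) ∧
      IsDemazureRoot p (Fin.castLE hnm i) e) := by
  refine ⟨fun e he => ⟨hB i ▸ he.1, fun l hl => ?_⟩,
    _, dotProduct_dotProductEquiv_symm_neg_coord B i, isDemazureRoot_neg_coord hnm p B hB hα i⟩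
  exact hB l ▸ he.2 _ ((Fin.castLE_injective hnm).ne hl)

/-- Let `Σ` be the fan of a complete toric variety admitting an additive
action: the primitive ray generators `p_1,…,p_n` form a basis `B` of `N` and
`p_j = -∑_i α_{ji} p_i` with all `α_{ji} ≥ 0` for `j > n`.  Then for each
`1 ≤ i ≤ n` the set `R_i` of Demazure roots with distinguished ray `ρ_i` is
contained in `-p_i^* + ∑_{l ≠ i} ℤ_{≥0} p_l^*` (i.e. every such root `e`
satisfies `⟨p_i, e⟩ = -1` and `⟨p_l, e⟩ ≥ 0` for `l ≠ i`), and the vector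
`-p_i^*` (characterized by `⟨p_l, -p_i^*⟩ = -δ_{li}`) belongs to `R_i`. -/
theorem roots_structure_of_additive_action_fan
    {n m : ℕ} (hnm : n ≤ m) (p : Fin m → (Fin n → ℤ))
    (hp : Function.Injective p)
    (B : Module.Basis (Fin n) ℤ (Fin n → ℤ))
    (hB : ∀ i : Fin n, B i = p (Fin.castLE hnm i))
    (hα : ∀ j : Fin m, n ≤ (j : ℕ) → ∀ i : Fin n, B.repr (p j) i ≤ 0)
    (i : Fin n) :
    (∀ e : Fin n → ℤ, IsDemazureRoot p (Fin.castLE hnm i) e →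
      (dotProduct (B i) e = -1 ∧
        ∀ l : Fin n, l ≠ i → 0 ≤ dotProduct (B l) e)) ∧
    (∃ e : Fin n → ℤ,
      (∀ l : Fin n, dotProduct (B l) e = if l = i then -1 else 0) ∧
      IsDemazureRoot p (Fin.castLE hnm i) e) :=
  roots_structure_of_additive_action_fan_general hnm p B hB hα i
end
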